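/- arXiv:2203.07696 — 8 statements merged into one kernel-verified Lean document; each statement's English description precedes it below -/
import Mathlib

section
/- For every integer d ≥ 2 and every λ > 0, (2/(d−2)!) · ∫₀^λ z^{d−2} G_λ(z) dz = λ^d / (2^d · Γ(d/2 + 1)²). -/
/-!
With `n = d - 2`, substituting `z = l cos θ` gives `G l (l cos θ) = (l / π) (sin θ - θ cos θ)`,
so the integral becomes a combination of the Wallis integrals `W n = ∫₀^{π/2} cos^n`, the
`θ`-term after one integration by parts. The recursion `W (n + 2) = (n + 1) / (n + 2) * W n`
collapses it to `l^(n+2) W n / (π (n + 2)²)`, and the same recursion gives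
`W n = π n! / (2^(n+1) Γ(n/2 + 1)²)`.
-/

open Real intervalIntegral Set Nat

noncomputable def G (l z : ℝ) : ℝ :=
  (1 / Real.pi) * (Real.sqrt (l ^ 2 - z ^ 2) - z * Real.arccos (z / l))

noncomputable def wallis (n : ℕ) : ℝ := ∫ x in (0 : ℝ)..π / 2, cos x ^ n

lemma wallis_add_two (n : ℕ) : wallis (n + 2) = (n + 1) / (n + 2) * wallis n := by
  simp [wallis, integral_cos_pow]

lemma Gamma_natCast_add_two_div_two_add_one (n : ℕ) :
    Gamma (((n + 2 : ℕ) : ℝ) / 2 + 1) = ((n : ℝ) / 2 + 1) * Gamma ((n : ℝ) / 2 + 1) := by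
  rw [show ((n + 2 : ℕ) : ℝ) / 2 + 1 = ((n : ℝ) / 2 + 1) + 1 by push_cast; ring,
    Gamma_add_one (by positivity)]

lemma wallis_eq_Gamma (n : ℕ) :
    wallis n = π * n ! / (2 ^ (n + 1) * Gamma ((n : ℝ) / 2 + 1) ^ 2) := by
  induction n using Nat.twoStepInduction with
  | zero => simp [wallis]
  | one =>
    have hwallis : wallis 1 = 1 := by simp [wallis]
    have hΓ : Gamma ((1 : ℝ) / 2 + 1) = √π / 2 := by
      rw [Gamma_add_one (by norm_num), Gamma_one_half_eq]
      ring
    rw [hwallis, Nat.cast_one, hΓ]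
    field_simp
    rw [sq_sqrt pi_pos.le]
    ring
  | more n ih _ =>
    have hΓ : 0 < Gamma ((n : ℝ) / 2 + 1) := Gamma_pos_of_pos (by positivity)
    rw [wallis_add_two, ih, Gamma_natCast_add_two_div_two_add_one, factorial_succ,
      factorial_succ]
    push_cast
    field_simp
    ring

lemma integral_sin_sq_mul_cos_pow (n : ℕ) :
    ∫ x in (0 : ℝ)..π / 2, sin x ^ 2 * cos x ^ n = wallis n - wallis (n + 2) := by
  have hsin : ∀ x, sin x ^ 2 * cos x ^ n = cos x ^ n - cos x ^ (n + 2) := fun x => by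
    rw [sin_sq]
    ring
  simp only [hsin, wallis]
  exact integral_sub (Continuous.intervalIntegrable (by fun_prop) _ _)
    (Continuous.intervalIntegrable (by fun_prop) _ _)

lemma integral_mul_sin_mul_cos_pow (n : ℕ) :
    ∫ x in (0 : ℝ)..π / 2, x * (sin x * cos x ^ (n + 1)) = wallis (n + 2) / (n + 2) := by
  have hprim : ∀ x ∈ uIcc (0 : ℝ) (π / 2),
      HasDerivAt (fun y => -cos y ^ (n + 2) / (n + 2)) (sin x * cos x ^ (n + 1)) x := by
    intro x _
    refine (((hasDerivAt_cos x).fun_pow (n + 2)).neg.div_const ((n : ℝ) + 2)).congr_deriv ?_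
    rw [Nat.add_succ_sub_one]
    push_cast
    field_simp
  rw [integral_mul_deriv_eq_deriv_mul (u := fun x => x) (fun x _ => hasDerivAt_id x) hprim
    (Continuous.intervalIntegrable (by fun_prop) _ _)
    (Continuous.intervalIntegrable (by fun_prop) _ _)]
  simp [wallis, integral_div, neg_div]

lemma G_mul_cos {l x : ℝ} (hl : 0 < l) (hx : x ∈ Icc 0 π) :
    G l (l * cos x) = l / π * (sin x - x * cos x) := by
  have hsqrt : √(l ^ 2 - (l * cos x) ^ 2) = l * sin x := by
    rw [← sqrt_sq (mul_nonneg hl.le (sin_nonneg_of_mem_Icc hx))]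
    congr 1
    linear_combination -l ^ 2 * sin_sq_add_cos_sq x
  rw [G, hsqrt, mul_div_cancel_left₀ _ hl.ne', arccos_cos hx.1 hx.2]
  ring

lemma integral_pow_mul_G_eq_integral_trig (n : ℕ) {l : ℝ} (hl : 0 < l) :
    ∫ z in (0 : ℝ)..l, z ^ n * G l z = l ^ (n + 2) / π *
      ∫ x in (0 : ℝ)..π / 2, sin x ^ 2 * cos x ^ n - x * (sin x * cos x ^ (n + 1)) := by
  have hcont : Continuous fun z => z ^ n * G l z := by
    unfold G
    fun_prop
  have hderiv : ∀ x ∈ uIcc 0 (π / 2), HasDerivAt (fun x => l * cos x) (-(l * sin x)) x :=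
    fun x _ => by simpa using (hasDerivAt_cos x).const_mul l
  have hsubst := integral_comp_mul_deriv hderiv (by fun_prop) hcont
  simp only [Function.comp_def, cos_zero, cos_pi_div_two, mul_zero, mul_one] at hsubst
  rw [integral_symm, ← hsubst, ← integral_neg, ← integral_const_mul]
  refine integral_congr fun x hx => ?_
  rw [uIcc_of_le (by positivity)] at hx
  simp only [G_mul_cos hl ⟨hx.1, hx.2.trans (by linarith [pi_pos])⟩]
  field_simp
  ring

lemma integral_pow_mul_G (n : ℕ) {l : ℝ} (hl : 0 < l) :
    ∫ z in (0 : ℝ)..l, z ^ n * G l z = l ^ (n + 2) / π * (wallis n / (n + 2) ^ 2) := by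
  have hn : (n : ℝ) + 2 ≠ 0 := by positivity
  rw [integral_pow_mul_G_eq_integral_trig n hl,
    integral_sub (Continuous.intervalIntegrable (by fun_prop) _ _)
      (Continuous.intervalIntegrable (by fun_prop) _ _),
    integral_sin_sq_mul_cos_pow, integral_mul_sin_mul_cos_pow, wallis_add_two]
  field_simp
  ring

theorem stmt3 (d : ℕ) (hd : 2 ≤ d) (l : ℝ) (hl : 0 < l) :
    (2 / (Nat.factorial (d - 2) : ℝ)) * ∫ z in (0 : ℝ)..l, z ^ (d - 2) * G l z =
      l ^ d / (2 ^ d * (Real.Gamma ((d : ℝ) / 2 + 1)) ^ 2) := by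
  obtain ⟨n, rfl⟩ := Nat.exists_eq_add_of_le' hd
  have hΓ : 0 < Gamma ((n : ℝ) / 2 + 1) := Gamma_pos_of_pos (by positivity)
  rw [Nat.add_sub_cancel, integral_pow_mul_G n hl, wallis_eq_Gamma,
    Gamma_natCast_add_two_div_two_add_one]
  field_simp
  ring
end

section
/- For every λ ≥ 2, G_λ(λ − 1) < 1/4, i.e. (1/π)(√(2λ−1) − (λ−1)·arccos((λ−1)/λ)) < 1/4. -/
open Real

theorem Real.sqrt_two_mul_le_arccos_one_sub {x : ℝ} (hx₀ : 0 ≤ x) (hx₂ : x ≤ 2) :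
    √(2 * x) ≤ arccos (1 - x) := by
  have hcos : cos (arccos (1 - x)) = 1 - x := cos_arccos (by linarith) (by linarith)
  have hsq : 2 * x ≤ arccos (1 - x) ^ 2 := by
    linarith [one_sub_sq_div_two_le_cos (x := arccos (1 - x))]
  exact (sqrt_le_left (arccos_nonneg _)).2 hsq

theorem Real.sqrt_sub_one_le_sqrt_sub {y : ℝ} (hy : 1 / 2 ≤ y) :
    √(y - 1) ≤ √y - 1 / (2 * √y) := by
  have hs : 0 < √y := sqrt_pos.2 (by linarith)
  have hs2 : √y ^ 2 = y := sq_sqrt (by linarith)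
  refine sqrt_le_iff.2 ⟨?_, ?_⟩
  · rw [sub_nonneg, div_le_iff₀ (by positivity)]
    nlinarith
  · have hcross : 2 * √y * (1 / (2 * √y)) = 1 := by field_simp
    rw [sub_sq, hs2, hcross]
    linarith [sq_nonneg (1 / (2 * √y))]

theorem stmt4 (l : ℝ) (hl : 2 ≤ l) :
    G l (l - 1) < 1 / 4 := by
  set s := √(2 * l)
  have hs2 : s ^ 2 = 2 * l := sq_sqrt (by linarith)
  have hs : 2 ≤ s := (le_sqrt (by norm_num) (by linarith)).2 (by linarith)
  have harccos : 2 / s ≤ arccos ((l - 1) / l) := calc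
    2 / s ≤ √(2 * (1 / l)) := (le_sqrt (by positivity) (by positivity)).2 <| by
      rw [div_pow, hs2]; field_simp; rfl
    _ ≤ arccos (1 - 1 / l) :=
      sqrt_two_mul_le_arccos_one_sub (by positivity) (by rw [div_le_iff₀ (by linarith)]; linarith)
    _ = arccos ((l - 1) / l) := by rw [one_sub_div (by linarith)]
  have hroot : √(l ^ 2 - (l - 1) ^ 2) ≤ s - 1 / (2 * s) := by
    rw [show l ^ 2 - (l - 1) ^ 2 = 2 * l - 1 by ring]
    exact sqrt_sub_one_le_sqrt_sub (by linarith)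
  have hlin : (l - 1) * (2 / s) = s - 2 / s := by
    field_simp; linarith
  have hbound : √(l ^ 2 - (l - 1) ^ 2) - (l - 1) * arccos ((l - 1) / l) ≤ 3 / 4 := calc
    _ ≤ (s - 1 / (2 * s)) - (l - 1) * (2 / s) := by
      gcongr; linarith
    _ = 3 / (2 * s) := by rw [hlin]; field_simp; ring
    _ ≤ 3 / 4 := by gcongr; linarith
  rw [G, one_div_mul_eq_div, div_lt_iff₀ pi_pos]
  linarith [pi_gt_three]
end

section
/- Let i < j be integers, n an integer, and g a decreasing convex function on [i, j+1] satisfying |g(z) − g(w)| ≤ |z − w|/2 for all z, w, and such that n+1 ≥ g(i+1) ≥ … ≥ g(j) ≥ n ≥ g(j+1). Then (1/2)⌊g(i)+1/4⌋ + Σ_{m=i+1}^{j−1} ⌊g(m)+1/4⌋ + (1/2)⌊g(j)+1/4⌋ ≤ ∫_i^j g(z) dz. -/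
/-!
Let `K` be the last integer point of `[i, j - 1]` where `g ≥ n + 3/4`, and `u = K - i`,
`t = j - K` (if there is no such point, every rounded value is at most `n ≤ g` and we are done).
Rounding gives at most `n + 1` up to `K` and at most `n` after it, so the trapezoid sum is at most
`n (j - i) + u + 1/2`, and it remains to show that `g - n ≥ 0` has integral at least `u + 1/2`
over `[i, j]`.
* `u = 0`: the Lipschitz bound `g - n ≥ 3/4 - (z - K)/2` on `[K, K + 1]` is worth `1/2`.
* `1 ≤ u ≤ t`: Hermite–Hadamard on `[K - u, K + u]` gives `2u (g K - n) ≥ 3u/2`.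
* `u > t`: the chord of `g` from `K` to `j + 1` drops by at least `3/4` over a length at most
  `u`, so by convexity `g - n` grows at least that fast to the left of `K`, which is worth `u` on
  `[i, K]`; add `1/2` from `[K, K + 1]` as in the first case.
-/

open MeasureTheory Set
open scoped NNReal Finset

noncomputable def trapezoidSum (b : ℤ → ℝ) (i j : ℤ) : ℝ :=
  1 / 2 * b i + ∑ m ∈ Finset.Icc (i + 1) (j - 1), b m + 1 / 2 * b j

theorem trapezoidSum_le (b : ℤ → ℝ) (c d : ℝ) {i j K : ℤ} (hiK : i ≤ K) (hKj : K < j)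
    (hi : b i ≤ c + d) (hlow : ∀ m ∈ Finset.Ioc i K, b m ≤ c + 1)
    (hhigh : ∀ m ∈ Finset.Ioc K j, b m ≤ c) :
    trapezoidSum b i j ≤ c * (j - i) + (K - i) + d / 2 := by
  have hsplit : Finset.Icc (i + 1) (j - 1) = Finset.Ioc i K ∪ Finset.Ioc K (j - 1) := by
    ext m
    simp only [Finset.mem_Icc, Finset.mem_union, Finset.mem_Ioc]
    omega
  have hdisj : Disjoint (Finset.Ioc i K) (Finset.Ioc K (j - 1)) :=
    Finset.disjoint_left.2 fun m h₁ h₂ => by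
      rw [Finset.mem_Ioc] at h₁ h₂
      omega
  have hcard₁ : (#(Finset.Ioc i K) : ℝ) = K - i := by
    exact_mod_cast Int.card_Ioc_of_le _ _ hiK
  have hcard₂ : (#(Finset.Ioc K (j - 1)) : ℝ) = j - 1 - K := by
    exact_mod_cast Int.card_Ioc_of_le _ _ (by omega : K ≤ j - 1)
  have hsum₁ := Finset.sum_le_card_nsmul _ _ _ hlow
  have hsum₂ := Finset.sum_le_card_nsmul (Finset.Ioc K (j - 1)) b c fun m hm =>
    hhigh m (Finset.Ioc_subset_Ioc_right (by omega) hm)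
  have hj := hhigh j (Finset.mem_Ioc.2 ⟨hKj, le_rfl⟩)
  rw [nsmul_eq_mul, hcard₁] at hsum₁
  rw [nsmul_eq_mul, hcard₂] at hsum₂
  rw [trapezoidSum, hsplit, Finset.sum_union hdisj]
  linarith

theorem floor_add_quarter_le {x : ℝ} {c : ℤ} (h : x < c + 3 / 4) :
    (⌊x + 1 / 4⌋ : ℝ) ≤ c := by
  exact_mod_cast Int.floor_le_iff.2 (by linarith)

theorem trapezoidSum_floor_le {g : ℝ → ℝ} {i j K n d : ℤ}
    (hanti : AntitoneOn g (Icc (i : ℝ) j)) (hiK : i ≤ K) (hKj : K < j)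
    (hi : g i < n + d + 3 / 4) (hlow : g (i + 1) < n + 7 / 4)
    (hhigh : g (K + 1) < n + 3 / 4) :
    trapezoidSum (fun m => ⌊g m + 1 / 4⌋) i j ≤ n * (j - i) + (K - i) + d / 2 := by
  have hanti' {m m' : ℤ} (hm : i ≤ m) (hmm' : m ≤ m') (hm' : m' ≤ j) : g m' ≤ g m := by
    have : (i : ℝ) ≤ m ∧ (m : ℝ) ≤ m' ∧ (m' : ℝ) ≤ j := by
      exact_mod_cast (⟨hm, hmm', hm'⟩ : i ≤ m ∧ m ≤ m' ∧ m' ≤ j)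
    exact hanti ⟨this.1, by linarith⟩ ⟨by linarith, this.2.2⟩ this.2.1
  refine trapezoidSum_le _ n d hiK hKj ?_ (fun m hm => ?_) fun m hm => floor_add_quarter_le ?_
  · exact_mod_cast floor_add_quarter_le (c := n + d) (by push_cast; linarith)
  · rw [Finset.mem_Ioc] at hm
    have := hanti' (m := i + 1) (by omega) hm.1 (by omega)
    push_cast at this
    exact_mod_cast floor_add_quarter_le (c := n + 1) (by push_cast; linarith)
  · rw [Finset.mem_Ioc] at hm
    have := hanti' (m := K + 1) (by omega) hm.1 hm.2
    push_cast at this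
    linarith

theorem mul_le_integral_of_affine_le {g : ℝ → ℝ} {a b c s : ℝ} (hab : a ≤ b)
    (hg : IntervalIntegrable g volume a b) (h : ∀ z ∈ Icc a b, c + s * (z - a) ≤ g z) :
    (b - a) * (c + s * (b - a) / 2) ≤ ∫ z in a..b, g z := by
  have hℓ : Continuous fun z => s * (z - a) := by fun_prop
  calc (b - a) * (c + s * (b - a) / 2) = ∫ z in a..b, (c + s * (z - a)) := by
        rw [intervalIntegral.integral_add intervalIntegrable_const (hℓ.intervalIntegrable a b),
          intervalIntegral.integral_const, intervalIntegral.integral_const_mul,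
          intervalIntegral.integral_comp_sub_right fun z => z, integral_id, smul_eq_mul]
        ring
    _ ≤ ∫ z in a..b, g z := intervalIntegral.integral_mono_on hab
        (intervalIntegrable_const.add (hℓ.intervalIntegrable a b)) hg h

theorem mul_le_integral_of_le {g : ℝ → ℝ} {a b c : ℝ} (hab : a ≤ b)
    (hg : IntervalIntegrable g volume a b) (h : ∀ z ∈ Icc a b, c ≤ g z) :
    (b - a) * c ≤ ∫ z in a..b, g z := by
  simpa using mul_le_integral_of_affine_le (s := 0) hab hg (by simpa using h)

theorem LipschitzOnWith.mul_sub_le_integral {g : ℝ → ℝ} {L : ℝ≥0} {a b : ℝ}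
    (hab : a ≤ b) (hg : LipschitzOnWith L g (Icc a b)) :
    (b - a) * (g a - L * (b - a) / 2) ≤ ∫ z in a..b, g z := by
  have := mul_le_integral_of_affine_le (c := g a) (s := -L) hab
    (hg.continuousOn.intervalIntegrable_of_Icc hab) fun z hz => by
      have := hg.le_add_mul (left_mem_Icc.2 hab) hz
      rw [Real.dist_eq, abs_of_nonpos (by linarith [hz.1])] at this
      linarith
  convert this using 2
  ring

/-- The left half of the Hermite–Hadamard inequality. -/
theorem ConvexOn.mul_midpoint_le_integral {g : ℝ → ℝ} {a b : ℝ} (hab : a ≤ b)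
    (hconv : ConvexOn ℝ (Icc a b) g) (hg : IntervalIntegrable g volume a b) :
    (b - a) * g ((a + b) / 2) ≤ ∫ z in a..b, g z := by
  have hg' : IntervalIntegrable (fun z => g (a + b - z)) volume a b := by
    simpa using (hg.comp_sub_left (a + b)).symm
  have hreflect : ∫ z in a..b, g (a + b - z) = ∫ z in a..b, g z := by
    simp [intervalIntegral.integral_comp_sub_left]
  have hmid : ∀ z ∈ Icc a b, 2 * g ((a + b) / 2) ≤ g z + g (a + b - z) := by
    intro z hz
    have := hconv.2 hz (⟨by linarith [hz.2], by linarith [hz.1]⟩ : a + b - z ∈ Icc a b)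
      (by norm_num : (0 : ℝ) ≤ 1 / 2) (by norm_num : (0 : ℝ) ≤ 1 / 2) (by norm_num)
    rw [smul_eq_mul, smul_eq_mul, smul_eq_mul, smul_eq_mul,
      show 1 / 2 * z + 1 / 2 * (a + b - z) = (a + b) / 2 by ring] at this
    linarith
  have := mul_le_integral_of_le hab (hg.add hg') hmid
  rw [intervalIntegral.integral_add hg hg', hreflect] at this
  linarith

/-- By convexity, `g` rises to the left of `c` at least at the slope of its chord over `[c, b]`. -/
theorem ConvexOn.mul_le_integral_of_drop {g : ℝ → ℝ} {a b c : ℝ} (hac : a ≤ c)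
    (hcb : c < b) (hba : b - c ≤ c - a) (hconv : ConvexOn ℝ (Icc a b) g)
    (hg : IntervalIntegrable g volume a c) (hgbc : g b ≤ g c) :
    (c - a) * (g c + (g c - g b) / 2) ≤ ∫ z in a..c, g z := by
  set s := (g c - g b) / (b - c) with hs
  have hs0 : 0 ≤ s := div_nonneg (by linarith) (by linarith)
  have hdrop : g c - g b ≤ s * (c - a) := by
    rw [hs, div_mul_eq_mul_div, le_div_iff₀ (by linarith)]
    nlinarith
  have hchord : ∀ z ∈ Icc a c, (g c + s * (c - a)) + -s * (z - a) ≤ g z := by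
    intro z hz
    rcases hz.2.eq_or_lt with rfl | hzc
    · linarith
    have := hconv.slope_mono_adjacent ⟨hz.1, by linarith [hz.2]⟩ ⟨by linarith, le_rfl⟩
      hzc hcb
    rw [show (g b - g c) / (b - c) = -s by rw [hs]; ring, div_le_iff₀ (by linarith)] at this
    linarith
  have := mul_le_integral_of_affine_le hac hg hchord
  nlinarith

theorem le_integral_of_convex_of_drop (i j K : ℤ) (n : ℝ) {g : ℝ → ℝ} (hiK : i ≤ K)
    (hKj : K < j)
    (hconv : ConvexOn ℝ (Icc (i : ℝ) (j + 1)) g)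
    (hlip : LipschitzOnWith (1 / 2) g (Icc (i : ℝ) (j + 1)))
    (hgK : n + 3 / 4 ≤ g K) (hgj : g (j + 1) ≤ n) (hge : ∀ z ∈ Icc (i : ℝ) j, n ≤ g z) :
    n * (j - i) + (K - i) + 1 / 2 ≤ ∫ z in (i : ℝ)..j, g z := by
  have hint {x y : ℝ} (hx : i ≤ x) (hy : y ≤ j + 1) (hxy : x ≤ y) :
      IntervalIntegrable g volume x y :=
    (hlip.continuousOn.mono (Icc_subset_Icc hx hy)).intervalIntegrable_of_Icc hxy
  have hsplit {x : ℝ} (hx : i ≤ x) (hxj : x ≤ j) :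
      ∫ z in (i : ℝ)..j, g z = (∫ z in (i : ℝ)..x, g z) + ∫ z in x..j, g z :=
    (intervalIntegral.integral_add_adjacent_intervals (hint le_rfl (by linarith) hx)
      (hint hx (by linarith) hxj)).symm
  have hiK' : (i : ℝ) ≤ K := by exact_mod_cast hiK
  have hKj' : (K : ℝ) + 1 ≤ j := by exact_mod_cast hKj
  have hright : n * (j - K) + 1 / 2 ≤ ∫ z in (K : ℝ)..j, g z := by
    have hstep := (hlip.mono (Icc_subset_Icc hiK' (by linarith))).mul_sub_le_integral
      (by linarith : (K : ℝ) ≤ K + 1)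
    have htail := mul_le_integral_of_le hKj' (hint (by linarith) (by linarith) hKj')
      fun z hz => hge z ⟨by linarith [hz.1], hz.2⟩
    rw [← intervalIntegral.integral_add_adjacent_intervals
      (hint hiK' (by linarith) (by linarith)) (hint (by linarith) (by linarith) hKj')]
    norm_num at hstep
    linarith
  rcases hiK.eq_or_lt with rfl | hiK
  · linarith
  have hiK₁ : (i : ℝ) + 1 ≤ K := by exact_mod_cast hiK
  by_cases hsym : 2 * K ≤ i + j
  · have hsym' : 2 * (K : ℝ) - i ≤ j := by
      have : ((2 * K : ℤ) : ℝ) ≤ i + j := by exact_mod_cast hsym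
      push_cast at this
      linarith
    have hmid := (hconv.subset (Icc_subset_Icc le_rfl (by linarith)) (convex_Icc _ _))
      |>.mul_midpoint_le_integral (by linarith : (i : ℝ) ≤ 2 * K - i)
        (hint le_rfl (by linarith) (by linarith))
    have htail := mul_le_integral_of_le hsym' (hint (by linarith) (by linarith) hsym')
      fun z hz => hge z ⟨by linarith [hz.1], hz.2⟩
    rw [show ((i : ℝ) + (2 * K - i)) / 2 = K by ring] at hmid
    rw [hsplit (by linarith) hsym']
    nlinarith
  · have hsym' : (j : ℝ) + 1 - K ≤ K - i := by
      have : ((i + j + 1 : ℤ) : ℝ) ≤ 2 * K := by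
        exact_mod_cast (by omega : i + j + 1 ≤ 2 * K)
      push_cast at this
      linarith
    have hleft := hconv.mul_le_integral_of_drop (by linarith) (by linarith) hsym'
      (hint le_rfl (by linarith) (by linarith)) (by linarith)
    rw [hsplit (x := K) (by linarith) (by linarith)]
    nlinarith

theorem stmt6 (i j n : ℤ) (hij : i < j) (g : ℝ → ℝ)
    (hanti : AntitoneOn g (Set.Icc (i : ℝ) (j + 1)))
    (hconv : ConvexOn ℝ (Set.Icc (i : ℝ) (j + 1)) g)
    (hlip : ∀ z ∈ Set.Icc (i : ℝ) (j + 1), ∀ w ∈ Set.Icc (i : ℝ) (j + 1),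
      |g z - g w| ≤ |z - w| / 2)
    (h1 : g (i + 1) ≤ (n : ℝ) + 1)
    (h2 : (n : ℝ) ≤ g (j : ℝ))
    (h3 : g ((j : ℝ) + 1) ≤ (n : ℝ)) :
    (1 / 2 : ℝ) * ⌊g (i : ℝ) + 1 / 4⌋ +
      (∑ m ∈ Finset.Icc (i + 1) (j - 1), (⌊g (m : ℝ) + 1 / 4⌋ : ℝ)) +
      (1 / 2 : ℝ) * ⌊g (j : ℝ) + 1 / 4⌋ ≤ ∫ z in (i : ℝ)..(j : ℝ), g z := by
  change trapezoidSum (fun m => ⌊g m + 1 / 4⌋) i j ≤ _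
  have hij' : (i : ℝ) + 1 ≤ j := by exact_mod_cast hij
  have hL : LipschitzOnWith (1 / 2) g (Icc (i : ℝ) (j + 1)) :=
    LipschitzOnWith.of_dist_le_mul fun z hz w hw => by
      simpa [Real.dist_eq, div_eq_inv_mul] using hlip z hz w hw
  have hge : ∀ z ∈ Icc (i : ℝ) j, (n : ℝ) ≤ g z := fun z hz =>
    h2.trans (hanti ⟨hz.1, by linarith [hz.2]⟩ ⟨by linarith, by linarith⟩ hz.2)
  have hstep : ∀ x ∈ Icc (i : ℝ) j, g x ≤ g (x + 1) + 1 / 2 := fun x hx => by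
    have := (abs_le.1 (hL.dist_le_mul x ⟨hx.1, by linarith [hx.2]⟩ (x + 1)
      ⟨by linarith [hx.1], by linarith [hx.2]⟩)).2
    norm_num at this
    linarith
  have hanti' : AntitoneOn g (Icc (i : ℝ) j) := hanti.mono (Icc_subset_Icc le_rfl (by linarith))
  have hgj := hstep j ⟨by linarith, le_rfl⟩
  by_cases hgi : g i < n + 3 / 4
  · have hgi₁ : g (i + 1) < n + 3 / 4 :=
      (hanti' ⟨le_rfl, by linarith⟩ ⟨by linarith, hij'⟩ (by linarith)).trans_lt hgi
    have hfloor := trapezoidSum_floor_le (K := i) (d := 0) hanti' le_rfl hij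
      (by simpa using hgi) (by linarith) hgi₁
    have hintegral := mul_le_integral_of_le (by linarith) ((hL.continuousOn.mono
      (Icc_subset_Icc le_rfl (by linarith))).intervalIntegrable_of_Icc (by linarith)) hge
    push_cast at hfloor
    linarith
  · obtain ⟨K, ⟨hiK, hKj, hgK⟩, hKmax⟩ := Int.exists_greatest_of_bdd
      (P := fun m => i ≤ m ∧ m ≤ j ∧ (n : ℝ) + 3 / 4 ≤ g m) ⟨j, fun m hm => hm.2.1⟩
      ⟨i, le_rfl, hij.le, not_lt.1 hgi⟩
    have hKj : K < j := hKj.lt_of_ne (by rintro rfl; linarith)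
    have hgK₁ : g (K + 1) < n + 3 / 4 := not_le.1 fun h =>
      (hKmax (K + 1) ⟨by omega, by omega, by push_cast; exact h⟩).not_gt (by omega)
    refine (trapezoidSum_floor_le (n := n) (d := 1) hanti' hiK hKj ?_ (by linarith) hgK₁).trans
      (by push_cast; exact le_integral_of_convex_of_drop i j K n hiK hKj hconv hL hgK h3 hge)
    push_cast
    linarith [hstep i ⟨le_rfl, by linarith⟩]
end

section
/- Let b > 0 and let g be a non-negative decreasing convex function on [0, b] with g(b) = 0 and |g(z) − g(w)| ≤ |z − w|/2 for all z, w ∈ [0, b]. Then ⌊g(0)+1/4⌋ + 2·Σ_{m=1}^{⌊b⌋} ⌊g(m)+1/4⌋ ≤ 2·∫₀^b g(z) dz, with equality only if g is identically zero on [0, b]. -/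
/-!
For `m ≥ 1`, `⌊g m + 1/4⌋` counts the levels `i + 3/4` (`i = 0, 1, …`) that `g` reaches at
`m`. As `g` is antitone, the integers `m ≥ 1` reaching the level `y` all lie in `[1, c]`, where `c`
is the last point with `g c = y`. The supporting line of the convex function `g` at `c` drops to `0`
before `b`, and comparing `g` with it gives `c ≤ ∫ min 1 (max 0 (g - y + 1/2))`. Summed over the
levels, these layers telescope to `g - min (1/4) g`, minus the part of `g` above the top level.

The supporting line at the point `c` where `g c = 1/4` also has slope at least `-1/2`, which gives
`∫ min (1/4) g ≥ c/4 + 1/16`. The Lipschitz bound puts `c` far enough to the right to pay for the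
term `⌊g 0 + 1/4⌋`; if instead `g 1` lies below the top level, the part of `g` above that level
pays for it. Either way the inequality is strict, with `1/8` to spare, unless `g 0 < 3/4`. In that
case every floor vanishes, and equality forces `∫ g = 0`.
-/

open Set

lemma sub_le_of_abs_sub_le_half {S : Set ℝ} {g : ℝ → ℝ}
    (hlip : ∀ z ∈ S, ∀ w ∈ S, |g z - g w| ≤ |z - w| / 2) {z w : ℝ} (hz : z ∈ S) (hw : w ∈ S)
    (hzw : z ≤ w) : g z - g w ≤ (w - z) / 2 := by
  have h := hlip z hz w hw
  rw [abs_of_nonpos (sub_nonpos.2 hzw), neg_sub] at h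
  exact (le_abs_self _).trans h

lemma continuousOn_of_abs_sub_le_half {S : Set ℝ} {g : ℝ → ℝ}
    (hlip : ∀ z ∈ S, ∀ w ∈ S, |g z - g w| ≤ |z - w| / 2) : ContinuousOn g S :=
  (LipschitzOnWith.of_dist_le_mul (K := 1 / 2) fun z hz w hw => by
    rw [Real.dist_eq, Real.dist_eq]
    push_cast
    linarith [hlip z hz w hw]).continuousOn

lemma AntitoneOn.exists_level_cut {a b y : ℝ} {g : ℝ → ℝ} (hab : a ≤ b)
    (hg : ContinuousOn g (Icc a b)) (hanti : AntitoneOn g (Icc a b)) (hgb : g b ≤ y)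
    (hga : y ≤ g a) :
    ∃ c ∈ Icc a b, g c = y ∧ ∀ z ∈ Icc a b, y ≤ g z ↔ z ≤ c := by
  set S := Icc a b ∩ g ⁻¹' Ici y
  have hSne : S.Nonempty := ⟨a, left_mem_Icc.2 hab, hga⟩
  have hSbdd : BddAbove S := ⟨b, fun z hz => hz.1.2⟩
  have hcS : sSup S ∈ S :=
    (hg.preimage_isClosed_of_isClosed isClosed_Icc isClosed_Ici).csSup_mem hSne hSbdd
  obtain ⟨hcI, hgc⟩ := hcS
  obtain ⟨z, hz, hgz⟩ := intermediate_value_Icc' hcI.2 (hg.mono (Icc_subset_Icc hcI.1 le_rfl))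
    ⟨hgb, hgc⟩
  have hzS : z ∈ S := ⟨⟨hcI.1.trans hz.1, hz.2⟩, hgz.ge⟩
  have hzc : z = sSup S := le_antisymm (le_csSup hSbdd hzS) hz.1
  refine ⟨sSup S, hcI, hzc ▸ hgz, fun w hw => ⟨fun hgw => le_csSup hSbdd ⟨hw, hgw⟩,
    fun hwc => hgc.trans (hanti hw hcI hwc)⟩⟩

lemma ConvexOn.add_rightDeriv_mul_sub_le {S : Set ℝ} {f : ℝ → ℝ} {x z : ℝ}
    (hf : ConvexOn ℝ S f) (hx : x ∈ interior S) (hz : z ∈ S) :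
    f x + derivWithin f (Ioi x) x * (z - x) ≤ f z := by
  rcases lt_trichotomy z x with hzx | rfl | hxz
  · have h := (hf.slope_le_leftDeriv_of_mem_interior hz hx hzx).trans
      (hf.leftDeriv_le_rightDeriv_of_mem_interior hx)
    rw [slope_def_field, div_le_iff₀ (sub_pos.2 hzx)] at h
    linarith
  · simp
  · have h := hf.rightDeriv_le_slope_of_mem_interior hx hz hxz
    rw [slope_def_field, le_div_iff₀ (sub_pos.2 hxz)] at h
    linarith

lemma exists_descent_line {b c : ℝ} {g : ℝ → ℝ} (hconv : ConvexOn ℝ (Icc 0 b) g)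
    (hlip : ∀ z ∈ Icc (0 : ℝ) b, ∀ w ∈ Icc (0 : ℝ) b, |g z - g w| ≤ |z - w| / 2)
    (hgb : g b = 0) (hc0 : 0 < c) (hcb : c < b) :
    ∃ σ ≤ 1 / 2, g c ≤ σ * (b - c) ∧ ∀ z ∈ Icc 0 b, g c - σ * (z - c) ≤ g z := by
  have hc : c ∈ interior (Icc 0 b) := by rw [interior_Icc]; exact ⟨hc0, hcb⟩
  have h0 : (0 : ℝ) ∈ Icc 0 b := ⟨le_rfl, (hc0.trans hcb).le⟩
  have hb : b ∈ Icc 0 b := ⟨(hc0.trans hcb).le, le_rfl⟩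
  set s := derivWithin g (Ioi c) c
  refine ⟨-s, ?_, ?_, fun z hz => by linarith [hconv.add_rightDeriv_mul_sub_le hc hz]⟩
  · have h := (hconv.slope_le_leftDeriv_of_mem_interior h0 hc hc0).trans
      (hconv.leftDeriv_le_rightDeriv_of_mem_interior hc)
    have hslope : -(1 / 2) ≤ slope g 0 c := by
      rw [slope_def_field, sub_zero, le_div_iff₀ hc0]
      linarith [sub_le_of_abs_sub_le_half hlip h0 (interior_subset hc) hc0.le]
    linarith
  · have h := hconv.rightDeriv_le_slope_of_mem_interior hc hb hcb
    rw [slope_def_field, hgb, le_div_iff₀ (sub_pos.2 hcb)] at h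
    linarith

lemma integral_max_zero_sub_mul {a σ L : ℝ} (hσ : 0 < σ) (ha : 0 ≤ a) (hL : a ≤ σ * L) :
    ∫ t in (0 : ℝ)..L, max 0 (a - σ * t) = a ^ 2 / (2 * σ) := by
  have hr : 0 ≤ a / σ := div_nonneg ha hσ.le
  have hrL : a / σ ≤ L := by rwa [div_le_iff₀' hσ]
  have hcont : Continuous fun t : ℝ => max 0 (a - σ * t) := by fun_prop
  rw [← intervalIntegral.integral_add_adjacent_intervals (hcont.intervalIntegrable 0 (a / σ))
    (hcont.intervalIntegrable _ L)]
  have hlin : ∫ t in (0 : ℝ)..a / σ, max 0 (a - σ * t) = ∫ t in (0 : ℝ)..a / σ, (a - σ * t) := by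
    refine intervalIntegral.integral_congr fun t ht => max_eq_right ?_
    rw [uIcc_of_le hr] at ht
    have := (le_div_iff₀' hσ).1 ht.2
    linarith
  have hzero : ∫ t in a / σ..L, max 0 (a - σ * t) = ∫ _ in a / σ..L, (0 : ℝ) := by
    refine intervalIntegral.integral_congr fun t ht => max_eq_left ?_
    rw [uIcc_of_le hrL] at ht
    have := (div_le_iff₀' hσ).1 ht.1
    linarith
  rw [hlin, hzero, intervalIntegral.integral_zero, add_zero,
    intervalIntegral.integral_sub intervalIntegrable_const
      (Continuous.intervalIntegrable (by fun_prop) _ _),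
    intervalIntegral.integral_const_mul, integral_id, intervalIntegral.integral_const, smul_eq_mul]
  field_simp
  ring

lemma integral_max_zero_sub_mul_le {a σ L : ℝ} (hσ : 0 < σ) (ha : 0 ≤ a) (hL : 0 ≤ L) :
    ∫ t in (0 : ℝ)..L, max 0 (a - σ * t) ≤ a ^ 2 / (2 * σ) := by
  have hfit : a ≤ σ * max L (a / σ) := by
    rw [← div_le_iff₀' hσ]; exact le_max_right _ _
  calc ∫ t in (0 : ℝ)..L, max 0 (a - σ * t)
      ≤ ∫ t in (0 : ℝ)..max L (a / σ), max 0 (a - σ * t) :=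
        intervalIntegral.integral_mono_interval le_rfl hL (le_max_left _ _)
          (Filter.Eventually.of_forall fun _ => le_max_left _ _)
          (Continuous.intervalIntegrable (by fun_prop) _ _)
    _ = a ^ 2 / (2 * σ) := integral_max_zero_sub_mul hσ ha hfit

lemma integral_max_zero_sub_mul_sub {a σ b c : ℝ} (hσ : 0 < σ) (ha : 0 ≤ a)
    (hfit : a ≤ σ * (b - c)) :
    ∫ z in c..b, max 0 (a - σ * (z - c)) = a ^ 2 / (2 * σ) := by
  rw [intervalIntegral.integral_comp_sub_right (fun t => max 0 (a - σ * t)), sub_self]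
  exact integral_max_zero_sub_mul hσ ha hfit

lemma le_integral_min_one_max_zero_line {b c σ : ℝ} (hc : 0 ≤ c) (hσ : 0 < σ)
    (hfit : 1 / 2 ≤ σ * (b - c)) :
    c ≤ ∫ z in (0 : ℝ)..b, min 1 (max 0 (1 / 2 - σ * (z - c))) := by
  -- Left of `c` the clipped line falls short of `1` by a reflected copy of the ramp it has right
  -- of `c`, and that ramp fits into `[c, b]` in full.
  have hcb : c ≤ b := by nlinarith
  have hcont : Continuous fun z : ℝ => min 1 (max 0 (1 / 2 - σ * (z - c))) := by fun_prop
  have hleft : ∫ z in (0 : ℝ)..c, min 1 (max 0 (1 / 2 - σ * (z - c)))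
      = c - ∫ t in (0 : ℝ)..c, max 0 (1 / 2 - σ * t) := by
    rw [intervalIntegral.integral_congr (g := fun z => 1 - max 0 (1 / 2 - σ * (c - z))),
      intervalIntegral.integral_sub intervalIntegrable_const
        (Continuous.intervalIntegrable (by fun_prop) _ _),
      intervalIntegral.integral_comp_sub_left (fun t => max 0 (1 / 2 - σ * t))]
    · simp
    intro z hz
    rw [uIcc_of_le hc] at hz
    have : 0 ≤ σ * (c - z) := mul_nonneg hσ.le (by linarith [hz.2])
    simp only [min_def, max_def]
    split_ifs <;> linarith
  have hright : ∫ z in c..b, min 1 (max 0 (1 / 2 - σ * (z - c))) = (1 / 2) ^ 2 / (2 * σ) := by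
    rw [← integral_max_zero_sub_mul_sub hσ (by norm_num) hfit]
    refine intervalIntegral.integral_congr fun z hz => min_eq_right (max_le zero_le_one ?_)
    rw [uIcc_of_le hcb] at hz
    nlinarith [hz.1]
  rw [← intervalIntegral.integral_add_adjacent_intervals (hcont.intervalIntegrable 0 c)
    (hcont.intervalIntegrable c b), hleft, hright]
  linarith [integral_max_zero_sub_mul_le hσ (by norm_num : (0 : ℝ) ≤ 1 / 2) hc]

lemma le_integral_min_of_line {b c σ a : ℝ} {g : ℝ → ℝ} (hg : ContinuousOn g (Icc 0 b))
    (hnonneg : ∀ z ∈ Icc 0 b, 0 ≤ g z) (hc : 0 ≤ c) (hσ : 0 < σ) (ha : 0 ≤ a)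
    (hfit : a ≤ σ * (b - c)) (hline : ∀ z ∈ Icc 0 b, a - σ * (z - c) ≤ g z) :
    a * c + a ^ 2 / (2 * σ) ≤ ∫ z in (0 : ℝ)..b, min a (g z) := by
  have hcb : c ≤ b := by nlinarith
  have hint : ∀ x y, 0 ≤ x → x ≤ y → y ≤ b →
      IntervalIntegrable (fun z => min a (g z)) MeasureTheory.volume x y := fun x y hx hxy hy =>
    ContinuousOn.intervalIntegrable_of_Icc hxy
      ((by fun_prop : ContinuousOn (fun z => min a (g z)) (Icc 0 b)).mono (Icc_subset_Icc hx hy))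
  have hleft : a * c ≤ ∫ z in (0 : ℝ)..c, min a (g z) := by
    have := intervalIntegral.integral_mono_on hc intervalIntegrable_const
      (hint 0 c le_rfl hc hcb) fun z hz => le_min le_rfl <| by
        nlinarith [hline z ⟨hz.1, hz.2.trans hcb⟩, hz.2]
    simpa [mul_comm] using this
  have hright : a ^ 2 / (2 * σ) ≤ ∫ z in c..b, min a (g z) := by
    rw [← integral_max_zero_sub_mul_sub hσ ha hfit]
    refine intervalIntegral.integral_mono_on hcb (Continuous.intervalIntegrable (by fun_prop) _ _)
      (hint c b hc hcb le_rfl) fun z hz => ?_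
    have hzI : z ∈ Icc 0 b := ⟨hc.trans hz.1, hz.2⟩
    have : 0 ≤ σ * (z - c) := mul_nonneg hσ.le (by linarith [hz.1])
    exact max_le (le_min ha (hnonneg z hzI)) (le_min (by linarith) (hline z hzI))
  rw [← intervalIntegral.integral_add_adjacent_intervals (hint 0 c le_rfl hc hcb)
    (hint c b hc hcb le_rfl)]
  linarith

lemma sq_sub_le_integral_max_zero_sub {b y : ℝ} {g : ℝ → ℝ} (hb : 0 ≤ b)
    (hg : ContinuousOn g (Icc 0 b))
    (hlip : ∀ z ∈ Icc (0 : ℝ) b, ∀ w ∈ Icc (0 : ℝ) b, |g z - g w| ≤ |z - w| / 2)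
    (hgb : g b = 0) (hy : 0 ≤ y) (hyg : y ≤ g 0) :
    (g 0 - y) ^ 2 ≤ ∫ z in (0 : ℝ)..b, max 0 (g z - y) := by
  have h0 : (0 : ℝ) ∈ Icc 0 b := ⟨le_rfl, hb⟩
  have hfit : g 0 - y ≤ 1 / 2 * b := by
    linarith [sub_le_of_abs_sub_le_half hlip h0 ⟨hb, le_rfl⟩ hb]
  calc (g 0 - y) ^ 2 = ∫ z in (0 : ℝ)..b, max 0 (g 0 - y - 1 / 2 * z) := by
        rw [integral_max_zero_sub_mul (by norm_num) (by linarith) hfit]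
        ring
    _ ≤ ∫ z in (0 : ℝ)..b, max 0 (g z - y) :=
        intervalIntegral.integral_mono_on hb (Continuous.intervalIntegrable (by fun_prop) _ _)
          (ContinuousOn.intervalIntegrable_of_Icc hb (by fun_prop)) fun z hz =>
          max_le_max le_rfl (by linarith [sub_le_of_abs_sub_le_half hlip h0 hz hz.1])

lemma floor_eq_sum_range_ite {x : ℝ} {n : ℕ} (hx : 0 ≤ x) (hn : ⌊x⌋ ≤ n) :
    (⌊x⌋ : ℝ) = ∑ i ∈ Finset.range n, if (i : ℝ) + 1 ≤ x then 1 else 0 := by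
  have hn' : ⌊x⌋₊ ≤ n := by rw [← Int.natCast_floor_eq_floor hx] at hn; exact_mod_cast hn
  have hfilter : (Finset.range n).filter (fun i : ℕ => (i : ℝ) + 1 ≤ x) = Finset.range ⌊x⌋₊ := by
    ext i
    rw [Finset.mem_filter, Finset.mem_range, Finset.mem_range, ← Nat.cast_add_one,
      ← Nat.le_floor_iff hx]
    omega
  rw [Finset.sum_boole, hfilter, Finset.card_range, ← Int.natCast_floor_eq_floor hx]
  push_cast
  rfl

lemma card_filter_Icc_one_le {N : ℤ} {p : ℤ → Prop} [DecidablePred p] {c : ℝ} (hc : 0 ≤ c)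
    (h : ∀ m ∈ Finset.Icc 1 N, p m → (m : ℝ) ≤ c) :
    (((Finset.Icc 1 N).filter p).card : ℝ) ≤ c := by
  have hsub : (Finset.Icc 1 N).filter p ⊆ Finset.Icc 1 ⌊c⌋ := fun m hm => by
    rw [Finset.mem_filter, Finset.mem_Icc] at hm
    exact Finset.mem_Icc.2 ⟨hm.1.1, Int.le_floor.2 (h m (Finset.mem_Icc.2 hm.1) hm.2)⟩
  calc (((Finset.Icc 1 N).filter p).card : ℝ) ≤ (Finset.Icc 1 ⌊c⌋).card := by
        exact_mod_cast Finset.card_le_card hsub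
    _ = ⌊c⌋₊ := by rw [Int.card_Icc, add_sub_cancel_right, Int.floor_toNat]
    _ ≤ c := Nat.floor_le hc

lemma sum_range_min_one_max_zero_sub (y : ℝ) (n : ℕ) :
    ∑ i ∈ Finset.range n, min 1 (max 0 (y - i)) = max 0 y - max 0 (y - n) := by
  have h : ∀ i : ℕ, min 1 (max 0 (y - i)) = max 0 (y - i) - max 0 (y - (i + 1 : ℕ)) := by
    intro i
    push_cast
    simp only [min_def, max_def]
    split_ifs <;> linarith
  simp_rw [h]
  rw [Finset.sum_range_sub' (fun i : ℕ => max 0 (y - i))]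
  simp

lemma Int.cast_mem_Icc_of_mem_Icc_one_floor {b : ℝ} {m : ℤ} (hm : m ∈ Finset.Icc 1 ⌊b⌋) :
    (m : ℝ) ∈ Icc 1 b := by
  rw [Finset.mem_Icc] at hm
  exact ⟨by exact_mod_cast hm.1, (Int.cast_le.2 hm.2).trans (Int.floor_le b)⟩

lemma le_integral_min_one_max_zero_of_level {b c y : ℝ} {g : ℝ → ℝ}
    (hg : ContinuousOn g (Icc 0 b)) (hconv : ConvexOn ℝ (Icc 0 b) g)
    (hlip : ∀ z ∈ Icc (0 : ℝ) b, ∀ w ∈ Icc (0 : ℝ) b, |g z - g w| ≤ |z - w| / 2)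
    (hgb : g b = 0) (hc : c ∈ Icc 0 b) (hy : 0 ≤ y) (hgc : g c = y + 1 / 2) :
    c ≤ ∫ z in (0 : ℝ)..b, min 1 (max 0 (g z - y)) := by
  rcases hc.1.eq_or_lt with rfl | hc0
  · exact intervalIntegral.integral_nonneg hc.2 fun _ _ => le_min zero_le_one (le_max_left _ _)
  have hcb : c < b := hc.2.lt_of_ne (by rintro rfl; linarith)
  obtain ⟨σ, -, hfit, hline⟩ := exists_descent_line hconv hlip hgb hc0 hcb
  have hσ : 0 < σ := by nlinarith
  have hb : 0 ≤ b := hc0.le.trans hcb.le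
  calc c ≤ ∫ z in (0 : ℝ)..b, min 1 (max 0 (1 / 2 - σ * (z - c))) :=
        le_integral_min_one_max_zero_line hc0.le hσ (by linarith)
    _ ≤ ∫ z in (0 : ℝ)..b, min 1 (max 0 (g z - y)) :=
        intervalIntegral.integral_mono_on hb (Continuous.intervalIntegrable (by fun_prop) _ _)
          (ContinuousOn.intervalIntegrable_of_Icc hb (by fun_prop)) fun z hz =>
          min_le_min le_rfl (max_le_max le_rfl (by linarith [hline z hz]))

lemma sum_floor_le_integral_max_zero_sub {b : ℝ} {g : ℝ → ℝ} {n : ℕ} (hb : 0 < b)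
    (hg : ContinuousOn g (Icc 0 b)) (hnonneg : ∀ z ∈ Icc (0 : ℝ) b, 0 ≤ g z)
    (hanti : AntitoneOn g (Icc 0 b)) (hconv : ConvexOn ℝ (Icc 0 b) g)
    (hlip : ∀ z ∈ Icc (0 : ℝ) b, ∀ w ∈ Icc (0 : ℝ) b, |g z - g w| ≤ |z - w| / 2)
    (hgb : g b = 0) (hn : (n : ℝ) ≤ g 0 + 1 / 4)
    (hfloor : ∀ m ∈ Finset.Icc 1 ⌊b⌋, ⌊g m + 1 / 4⌋ ≤ n) :
    ∑ m ∈ Finset.Icc 1 ⌊b⌋, (⌊g m + 1 / 4⌋ : ℝ) ≤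
      ∫ z in (0 : ℝ)..b, (max 0 (g z - 1 / 4) - max 0 (g z - 1 / 4 - n)) := by
  have hmem : ∀ m ∈ Finset.Icc 1 ⌊b⌋, (m : ℝ) ∈ Icc 0 b := fun m hm =>
    Icc_subset_Icc_left zero_le_one (Int.cast_mem_Icc_of_mem_Icc_one_floor hm)
  have hlevel : ∀ i ∈ Finset.range n,
      (((Finset.Icc 1 ⌊b⌋).filter fun m : ℤ => (i : ℝ) + 1 ≤ g m + 1 / 4).card : ℝ) ≤
        ∫ z in (0 : ℝ)..b, min 1 (max 0 (g z - 1 / 4 - i)) := by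
    intro i hi
    have hin : (i : ℝ) + 1 ≤ n := by exact_mod_cast Finset.mem_range.1 hi
    obtain ⟨c, hc, hgc, hcut⟩ := hanti.exists_level_cut hb.le hg
      (y := i + 3 / 4) (by rw [hgb]; positivity) (by linarith)
    calc _ ≤ c := card_filter_Icc_one_le hc.1 fun m hm hp => (hcut m (hmem m hm)).1 (by linarith)
      _ ≤ _ := by
        simpa only [sub_sub] using le_integral_min_one_max_zero_of_level hg hconv hlip hgb hc
          (y := 1 / 4 + i) (by positivity) (by linarith)
  calc ∑ m ∈ Finset.Icc 1 ⌊b⌋, (⌊g m + 1 / 4⌋ : ℝ)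
      = ∑ m ∈ Finset.Icc 1 ⌊b⌋, ∑ i ∈ Finset.range n,
          if (i : ℝ) + 1 ≤ g m + 1 / 4 then (1 : ℝ) else 0 :=
        Finset.sum_congr rfl fun m hm =>
          floor_eq_sum_range_ite (by linarith [hnonneg m (hmem m hm)]) (hfloor m hm)
    _ = ∑ i ∈ Finset.range n,
          (((Finset.Icc 1 ⌊b⌋).filter fun m : ℤ => (i : ℝ) + 1 ≤ g m + 1 / 4).card : ℝ) := by
        rw [Finset.sum_comm]
        simp only [Finset.sum_boole]
    _ ≤ ∑ i ∈ Finset.range n, ∫ z in (0 : ℝ)..b, min 1 (max 0 (g z - 1 / 4 - i)) :=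
        Finset.sum_le_sum hlevel
    _ = ∫ z in (0 : ℝ)..b, (max 0 (g z - 1 / 4) - max 0 (g z - 1 / 4 - n)) := by
        rw [← intervalIntegral.integral_finsetSum fun i _ =>
          ContinuousOn.intervalIntegrable_of_Icc hb.le (by fun_prop)]
        simp only [sum_range_min_one_max_zero_sub]

lemma sum_floor_le_integral_sub_of_quarter_level {b c : ℝ} {g : ℝ → ℝ} {n : ℕ} (hb : 0 < b)
    (hg : ContinuousOn g (Icc 0 b)) (hnonneg : ∀ z ∈ Icc (0 : ℝ) b, 0 ≤ g z)
    (hanti : AntitoneOn g (Icc 0 b)) (hconv : ConvexOn ℝ (Icc 0 b) g)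
    (hlip : ∀ z ∈ Icc (0 : ℝ) b, ∀ w ∈ Icc (0 : ℝ) b, |g z - g w| ≤ |z - w| / 2)
    (hgb : g b = 0) (hc : c ∈ Icc 0 b) (hc0 : 0 < c) (hgc : g c = 1 / 4)
    (hn : (n : ℝ) ≤ g 0 + 1 / 4) (hfloor : ∀ m ∈ Finset.Icc 1 ⌊b⌋, ⌊g m + 1 / 4⌋ ≤ n) :
    ∑ m ∈ Finset.Icc 1 ⌊b⌋, (⌊g m + 1 / 4⌋ : ℝ) ≤
      (∫ z in (0 : ℝ)..b, g z) - c / 4 - 1 / 16 - ∫ z in (0 : ℝ)..b, max 0 (g z - 1 / 4 - n) := by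
  have hcb : c < b := hc.2.lt_of_ne (by rintro rfl; linarith)
  obtain ⟨σ, hσ2, hfit, hline⟩ := exists_descent_line hconv hlip hgb hc0 hcb
  have hσ : 0 < σ := by nlinarith
  have hquarter : c / 4 + 1 / 16 ≤ ∫ z in (0 : ℝ)..b, min (1 / 4) (g z) := by
    have hmin := le_integral_min_of_line hg hnonneg hc0.le hσ (a := 1 / 4) (by norm_num)
      (hgc ▸ hfit) (hgc ▸ hline)
    have hσ' : 1 / 16 ≤ (1 / 4 : ℝ) ^ 2 / (2 * σ) := by
      rw [le_div_iff₀ (by positivity)]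
      linarith
    linarith
  have hsplit : ∫ z in (0 : ℝ)..b, (max 0 (g z - 1 / 4) - max 0 (g z - 1 / 4 - n)) =
      (∫ z in (0 : ℝ)..b, g z) - (∫ z in (0 : ℝ)..b, min (1 / 4) (g z)) -
        ∫ z in (0 : ℝ)..b, max 0 (g z - 1 / 4 - n) := by
    rw [← intervalIntegral.integral_sub (ContinuousOn.intervalIntegrable_of_Icc hb.le hg)
        (ContinuousOn.intervalIntegrable_of_Icc hb.le (by fun_prop)),
      ← intervalIntegral.integral_sub
        (ContinuousOn.intervalIntegrable_of_Icc hb.le (by fun_prop))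
        (ContinuousOn.intervalIntegrable_of_Icc hb.le (by fun_prop))]
    congr 1 with z
    simp only [min_def, max_def]
    split_ifs <;> linarith
  linarith [sum_floor_le_integral_max_zero_sub hb hg hnonneg hanti hconv hlip hgb hn hfloor]

lemma floor_add_two_mul_sum_floor_le {b : ℝ} {g : ℝ → ℝ} (hb : 0 < b)
    (hg : ContinuousOn g (Icc 0 b)) (hnonneg : ∀ z ∈ Icc (0 : ℝ) b, 0 ≤ g z)
    (hanti : AntitoneOn g (Icc 0 b)) (hconv : ConvexOn ℝ (Icc 0 b) g)
    (hlip : ∀ z ∈ Icc (0 : ℝ) b, ∀ w ∈ Icc (0 : ℝ) b, |g z - g w| ≤ |z - w| / 2)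
    (hgb : g b = 0) (hg0 : 3 / 4 ≤ g 0) :
    (⌊g 0 + 1 / 4⌋ : ℝ) + 2 * ∑ m ∈ Finset.Icc 1 ⌊b⌋, (⌊g m + 1 / 4⌋ : ℝ) ≤
      2 * (∫ z in (0 : ℝ)..b, g z) - 1 / 8 := by
  have h0 : (0 : ℝ) ∈ Icc 0 b := ⟨le_rfl, hb.le⟩
  have hmem : ∀ m ∈ Finset.Icc 1 ⌊b⌋, (m : ℝ) ∈ Icc 0 b ∧ 1 ≤ (m : ℝ) := fun m hm =>
    have hm' := Int.cast_mem_Icc_of_mem_Icc_one_floor hm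
    ⟨⟨zero_le_one.trans hm'.1, hm'.2⟩, hm'.1⟩
  obtain ⟨c, hc, hgc, hcut⟩ := hanti.exists_level_cut hb.le hg (y := 1 / 4)
    (by rw [hgb]; norm_num) (by linarith)
  have hc0 : 0 < c := hc.1.lt_of_ne (by rintro rfl; linarith)
  have hbound := fun n => sum_floor_le_integral_sub_of_quarter_level (n := n) hb hg hnonneg hanti
    hconv hlip hgb hc hc0 hgc
  obtain ⟨K, hK⟩ : ∃ K : ℕ, (K : ℤ) = ⌊g 0 + 1 / 4⌋ :=
    ⟨_, Int.natCast_floor_eq_floor (by linarith)⟩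
  have hKle : (K : ℝ) ≤ g 0 + 1 / 4 := by exact_mod_cast hK ▸ Int.floor_le (g 0 + 1 / 4)
  have hKgt : g 0 + 1 / 4 < K + 1 := by exact_mod_cast hK ▸ Int.lt_floor_add_one (g 0 + 1 / 4)
  have hK1 : 1 ≤ K := by exact_mod_cast (show (0 : ℝ) < K by linarith)
  rw [← hK, Int.cast_natCast]
  -- Either `g` still reaches the top level `K - 1/4` at `1`, which pushes `c` beyond `2 K`,
  -- or every floor at an integer `m ≥ 1` is at most `K - 1`.
  by_cases h1 : 1 ≤ b ∧ (K : ℝ) - 1 / 4 ≤ g 1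
  · have h1I : (1 : ℝ) ∈ Icc 0 b := ⟨zero_le_one, h1.1⟩
    have hK1' : (1 : ℝ) ≤ K := by exact_mod_cast hK1
    have hfloor : ∀ m ∈ Finset.Icc 1 ⌊b⌋, ⌊g m + 1 / 4⌋ ≤ K := fun m hm =>
      hK ▸ Int.floor_mono (by linarith [hanti h0 (hmem m hm).1 (hmem m hm).1.1])
    have hKc : 2 * (K : ℝ) ≤ c := by
      linarith [sub_le_of_abs_sub_le_half hlip h1I hc ((hcut 1 h1I).1 (by linarith))]
    have hrest : 0 ≤ ∫ z in (0 : ℝ)..b, max 0 (g z - 1 / 4 - K) :=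
      intervalIntegral.integral_nonneg hb.le fun _ _ => le_max_left _ _
    linarith [hbound K hKle hfloor]
  · obtain ⟨n, rfl⟩ : ∃ n, K = n + 1 := Nat.exists_eq_add_one.2 hK1
    push_cast at hKle hKgt h1 ⊢
    have hfloor : ∀ m ∈ Finset.Icc 1 ⌊b⌋, ⌊g m + 1 / 4⌋ ≤ n := by
      intro m hm
      obtain ⟨hmI, hm1⟩ := hmem m hm
      have hg1 : g m ≤ g 1 := hanti ⟨zero_le_one, hm1.trans hmI.2⟩ hmI hm1
      have : g 1 < n + 1 - 1 / 4 := lt_of_not_ge fun h => h1 ⟨hm1.trans hmI.2, h⟩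
      exact Int.floor_le_iff.2 (by push_cast; linarith)
    have hexcess := sq_sub_le_integral_max_zero_sub hb.le hg hlip hgb (y := 1 / 4 + n)
      (by positivity) (by linarith)
    simp only [← sub_sub] at hexcess
    have hc2 := sub_le_of_abs_sub_le_half hlip h0 hc hc.1
    nlinarith [hbound n (by linarith) hfloor, mul_nonneg (by linarith : (0 : ℝ) ≤ g 0 - 3 / 4 - n)
      (by linarith : (0 : ℝ) ≤ g 0 + 3 / 4 - n)]

lemma sum_floor_add_quarter_eq_zero {b : ℝ} {g : ℝ → ℝ}
    (hnonneg : ∀ z ∈ Icc (0 : ℝ) b, 0 ≤ g z) (hanti : AntitoneOn g (Icc 0 b))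
    (hg0 : g 0 < 3 / 4) :
    ∑ m ∈ Finset.Icc 1 ⌊b⌋, (⌊g m + 1 / 4⌋ : ℝ) = 0 := by
  refine Finset.sum_eq_zero fun m hm => ?_
  have hm' := Int.cast_mem_Icc_of_mem_Icc_one_floor hm
  have hmI : (m : ℝ) ∈ Icc 0 b := ⟨zero_le_one.trans hm'.1, hm'.2⟩
  have hgm : g m ≤ g 0 := hanti ⟨le_rfl, hmI.1.trans hmI.2⟩ hmI hmI.1
  rw [Int.floor_eq_zero_iff.2 ⟨by linarith [hnonneg m hmI], by linarith⟩, Int.cast_zero]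

theorem stmt7 (b : ℝ) (hb : 0 < b) (g : ℝ → ℝ)
    (hnonneg : ∀ z ∈ Set.Icc (0 : ℝ) b, 0 ≤ g z)
    (hanti : AntitoneOn g (Set.Icc (0 : ℝ) b))
    (hconv : ConvexOn ℝ (Set.Icc (0 : ℝ) b) g)
    (hgb : g b = 0)
    (hlip : ∀ z ∈ Set.Icc (0 : ℝ) b, ∀ w ∈ Set.Icc (0 : ℝ) b,
      |g z - g w| ≤ |z - w| / 2) :
    ((⌊g 0 + 1 / 4⌋ : ℝ) + 2 * ∑ m ∈ Finset.Icc 1 ⌊b⌋, (⌊g (m : ℝ) + 1 / 4⌋ : ℝ)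
        ≤ 2 * ∫ z in (0 : ℝ)..b, g z) ∧
      ((⌊g 0 + 1 / 4⌋ : ℝ) + 2 * ∑ m ∈ Finset.Icc 1 ⌊b⌋, (⌊g (m : ℝ) + 1 / 4⌋ : ℝ)
          = 2 * ∫ z in (0 : ℝ)..b, g z →
        ∀ z ∈ Set.Icc (0 : ℝ) b, g z = 0) := by
  have hg := continuousOn_of_abs_sub_le_half hlip
  rcases le_or_gt (3 / 4) (g 0) with hg0 | hg0
  · have := floor_add_two_mul_sum_floor_le hb hg hnonneg hanti hconv hlip hgb hg0
    exact ⟨by linarith, fun h => absurd h (by linarith)⟩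
  have hK : ⌊g 0 + 1 / 4⌋ = 0 :=
    Int.floor_eq_zero_iff.2 ⟨by linarith [hnonneg 0 ⟨le_rfl, hb.le⟩], by linarith⟩
  rw [hK, sum_floor_add_quarter_eq_zero hnonneg hanti hg0, Int.cast_zero, mul_zero, add_zero]
  have hint : 0 ≤ ∫ z in (0 : ℝ)..b, g z := intervalIntegral.integral_nonneg hb.le hnonneg
  refine ⟨by linarith, fun h z hz => ?_⟩
  by_contra hz0
  have := intervalIntegral.integral_pos hb hg (fun x hx => hnonneg x (Ioc_subset_Icc_self hx))
    ⟨z, hz, (hnonneg z hz).lt_of_ne' hz0⟩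
  linarith
end

section
/- Let i < j be integers, n an integer, and g a decreasing convex function on [i, j] with n + 1/4 > g(i) ≥ … ≥ g(j−1) ≥ n − 3/4 > g(j). Then (1/2)⌊g(i)+3/4⌋ + Σ_{m=i+1}^{j−1} ⌊g(m)+3/4⌋ + (1/2)⌊g(j)+3/4⌋ ≥ ∫_i^j g(z) dz + (j−i)/4 − 1/2. -/
/-!
Convexity bounds the integral by the trapezoid sums over `[i, j - 1]` and `[j - 1, j]`, and the
chord inequality `(j - i) g(j - 1) ≤ g(i) + (j - 1 - i) g(j)` eliminates `g(j - 1)`. At the integer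
points `i, …, j - 1` monotonicity gives `g m ≥ n - 3/4`, so those floors are at least `n`, while
`⌊g j + 3/4⌋ > g j - 1/4`; the bounds `g i < n + 1/4` and `g j < n - 3/4` then close the estimate.
-/

open MeasureTheory Set

theorem ConvexOn.mul_le_chord {𝕜 : Type*} [Field 𝕜] [LinearOrder 𝕜] [IsStrictOrderedRing 𝕜]
    {s : Set 𝕜} {f : 𝕜 → 𝕜} (hf : ConvexOn 𝕜 s f) {x y z : 𝕜} (hx : x ∈ s) (hz : z ∈ s)
    (hxy : x ≤ y) (hyz : y ≤ z) : (z - x) * f y ≤ (z - y) * f x + (y - x) * f z := by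
  rcases hxy.eq_or_lt with rfl | hxy
  · linarith
  rcases hyz.eq_or_lt with rfl | hyz
  · linarith
  exact hf.secant_mono_aux1 hx hz hxy hyz

theorem integral_linear_interpolation (a b u v : ℝ) :
    ∫ x in a..b, ((b - x) * u + (x - a) * v) = (b - a) ^ 2 * (u + v) / 2 := by
  have hint : ∀ c d : ℝ, IntervalIntegrable (fun x : ℝ => (x - c) * d) volume a b :=
    fun c d => (by fun_prop : Continuous fun x : ℝ => (x - c) * d).intervalIntegrable _ _
  simp only [show ∀ x, (b - x) * u + (x - a) * v = (x - a) * v - (x - b) * u by intro x; ring]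
  rw [intervalIntegral.integral_sub (hint _ _) (hint _ _), intervalIntegral.integral_mul_const,
    intervalIntegral.integral_mul_const, intervalIntegral.integral_comp_sub_right (fun x => x),
    intervalIntegral.integral_comp_sub_right (fun x => x), integral_id, integral_id]
  ring

theorem ConvexOn.intervalIntegral_le_trapezoid {f : ℝ → ℝ} {a b : ℝ}
    (hf : ConvexOn ℝ (Icc a b) f) (hab : a ≤ b) (hint : IntervalIntegrable f volume a b) :
    ∫ x in a..b, f x ≤ (b - a) * (f a + f b) / 2 := by
  rcases hab.eq_or_lt with rfl | hlt
  · simp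
  have hchord : ∀ x ∈ Icc a b, (b - a) * f x ≤ (b - x) * f a + (x - a) * f b := fun x hx =>
    hf.mul_le_chord (left_mem_Icc.2 hab) (right_mem_Icc.2 hab) hx.1 hx.2
  have hline : IntervalIntegrable (fun x => (b - x) * f a + (x - a) * f b) volume a b :=
    (by fun_prop : Continuous fun x => (b - x) * f a + (x - a) * f b).intervalIntegrable _ _
  have h := intervalIntegral.integral_mono_on hab (hint.const_mul (b - a)) hline hchord
  rw [intervalIntegral.integral_const_mul, integral_linear_interpolation] at h
  refine le_of_mul_le_mul_left ?_ (sub_pos.2 hlt)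
  linarith

theorem ConvexOn.intervalIntegral_le_trapezoid_split {f : ℝ → ℝ} {a b c : ℝ}
    (hf : ConvexOn ℝ (Icc a b) f) (hint : IntervalIntegrable f volume a b) (hc : c ∈ Icc a b) :
    ∫ x in a..b, f x ≤ (c - a) * (f a + f c) / 2 + (b - c) * (f c + f b) / 2 := by
  have hab : a ≤ b := hc.1.trans hc.2
  have hint_ac : IntervalIntegrable f volume a c :=
    hint.mono_set (uIcc_subset_uIcc left_mem_uIcc (Icc_subset_uIcc hc))
  have hint_cb : IntervalIntegrable f volume c b :=
    hint.mono_set (uIcc_subset_uIcc (Icc_subset_uIcc hc) right_mem_uIcc)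
  rw [← intervalIntegral.integral_add_adjacent_intervals hint_ac hint_cb]
  gcongr
  · exact (hf.subset (Icc_subset_Icc le_rfl hc.2) (convex_Icc _ _)).intervalIntegral_le_trapezoid
      hc.1 hint_ac
  · exact (hf.subset (Icc_subset_Icc hc.1 le_rfl) (convex_Icc _ _)).intervalIntegral_le_trapezoid
      hc.2 hint_cb

theorem Int.card_Icc_mul_le_sum {a b : ℤ} (hab : a ≤ b + 1) {f : ℤ → ℝ} {c : ℝ}
    (h : ∀ m ∈ Finset.Icc a b, c ≤ f m) : ((b + 1 - a : ℤ) : ℝ) * c ≤ ∑ m ∈ Finset.Icc a b, f m := by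
  have hcard : ((Finset.Icc a b).card : ℝ) = ((b + 1 - a : ℤ) : ℝ) := by
    rw [Int.card_Icc, ← Int.cast_natCast, Int.toNat_of_nonneg (by omega)]
  rw [← hcard, ← nsmul_eq_mul]
  exact Finset.card_nsmul_le_sum _ _ _ h

theorem stmt8 (i j n : ℤ) (hij : i < j) (g : ℝ → ℝ)
    (hanti : AntitoneOn g (Set.Icc (i : ℝ) (j : ℝ)))
    (hconv : ConvexOn ℝ (Set.Icc (i : ℝ) (j : ℝ)) g)
    (h1 : g (i : ℝ) < (n : ℝ) + 1 / 4)
    (h2 : (n : ℝ) - 3 / 4 ≤ g ((j : ℝ) - 1))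
    (h3 : g (j : ℝ) < (n : ℝ) - 3 / 4) :
    (∫ z in (i : ℝ)..(j : ℝ), g z) + ((j : ℝ) - (i : ℝ)) / 4 - 1 / 2 ≤
      (1 / 2 : ℝ) * ⌊g (i : ℝ) + 3 / 4⌋ +
        (∑ m ∈ Finset.Icc (i + 1) (j - 1), (⌊g (m : ℝ) + 3 / 4⌋ : ℝ)) +
        (1 / 2 : ℝ) * ⌊g (j : ℝ) + 3 / 4⌋ := by
  have hij' : (i : ℝ) + 1 ≤ j := by exact_mod_cast hij
  have hi : (i : ℝ) ∈ Icc (i : ℝ) j := left_mem_Icc.2 (by linarith)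
  have hj : (j : ℝ) ∈ Icc (i : ℝ) j := right_mem_Icc.2 (by linarith)
  have hj1 : (j : ℝ) - 1 ∈ Icc (i : ℝ) j := ⟨by linarith, by linarith⟩
  have htrap := hconv.intervalIntegral_le_trapezoid_split
    (hanti.mono (uIcc_of_le hi.2).subset).intervalIntegrable hj1
  have hchord : (j - i) * g (j - 1) ≤ (j - (j - 1)) * g i + (j - 1 - i) * g j :=
    hconv.mul_le_chord hi hj hj1.1 hj1.2
  have hfloor : ∀ m : ℤ, i ≤ m → m ≤ j - 1 → (n : ℝ) ≤ ⌊g m + 3 / 4⌋ := by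
    intro m him hmj
    have him' : (i : ℝ) ≤ m := by exact_mod_cast him
    have hmj' : (m : ℝ) ≤ j - 1 := by exact_mod_cast hmj
    exact_mod_cast Int.le_floor.2 (by linarith [hanti ⟨him', by linarith⟩ hj1 hmj'])
  have hsum := Int.card_Icc_mul_le_sum (a := i + 1) (by omega) fun m hm =>
    hfloor m (by linarith [(Finset.mem_Icc.1 hm).1]) (Finset.mem_Icc.1 hm).2
  push_cast at hsum
  have hfloor_i := hfloor i le_rfl (by omega)
  have hfloor_j : g j - 1 / 4 < ⌊g j + 3 / 4⌋ := by linarith [Int.sub_one_lt_floor (g j + 3 / 4)]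
  have hqa : (j - i) * g i ≤ (j - i) * (n + 1 / 4) := mul_le_mul_of_nonneg_left h1.le (by linarith)
  have hqc : (j - 1 - i) * g j ≤ (j - 1 - i) * (n - 3 / 4) :=
    mul_le_mul_of_nonneg_left h3.le (by linarith)
  linarith
end

section
/- Let b > 0 and let g be a non-negative decreasing convex function on [0, b] with g(0) ≥ 1/4, g(b) = 0, and |g(z) − g(w)| ≤ |z − w|/2 for all z, w ∈ [0, b]. Set M₀ = 1 + max{ m ∈ {0,…,⌊b⌋} : g(m) ≥ 1/4 } and assume M₀ ≤ b. Then Σ_{m=0}^{⌊b⌋} ⌊g(m)+3/4⌋ ≥ ∫₀^b g(z) dz − (b − 3M₀)/8. -/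
/-!
Put `K = ⌊g 0 + 3/4⌋` and choose `0 = x₀ ≤ x₁ ≤ ⋯ ≤ x_K < M₀` with `g xᵢ = K + 1/4 - i` for `i ≥ 1`.
By convexity the integral over each `[xᵢ, xᵢ₊₁]` is at most the trapezoid, and these add up to
`∫₀^{x_K} g ≤ x₁ + ⋯ + x_K - x_K / 4`; beyond `x_K` the trapezoid bound gives
`∫_{x_K}^{M₀} g ≤ (M₀ - x_K) / 4` and `∫_{M₀}^b g ≤ (b - M₀) / 8`.
An integer `m ≤ xᵢ` has `g m ≥ K + 1/4 - i`, so counting the pairs `(i, m)` with `m ≤ xᵢ` in two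
ways, and using that `[0, x]` contains `⌊x⌋ + 1 ≥ x` integers, gives
`x₁ + ⋯ + x_{K-1} ≤ ∑_{m < M₀} (⌊g m + 3/4⌋ - 1)`.
-/

open Finset intervalIntegral

theorem ConvexOn.map_add_map_add_sub_le {g : ℝ → ℝ} {s : Set ℝ} (hg : ConvexOn ℝ s g)
    {c d z : ℝ} (hc : c ∈ s) (hd : d ∈ s) (hz : z ∈ Set.Icc c d) :
    g z + g (c + d - z) ≤ g c + g d := by
  obtain ⟨hcz, hzd⟩ := hz
  rcases hcz.eq_or_lt with rfl | hcz'
  · simp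
  have hcd : 0 < d - c := by linarith
  have ha : 0 ≤ (d - z) / (d - c) := div_nonneg (by linarith) hcd.le
  have hb : 0 ≤ (z - c) / (d - c) := div_nonneg (by linarith) hcd.le
  have hab : (d - z) / (d - c) + (z - c) / (d - c) = 1 := by field_simp; ring
  have h₁ := hg.2 hc hd ha hb hab
  have h₂ := hg.2 hc hd hb ha (by linarith)
  simp only [smul_eq_mul] at h₁ h₂
  rw [show (d - z) / (d - c) * c + (z - c) / (d - c) * d = z by field_simp; ring] at h₁
  rw [show (z - c) / (d - c) * c + (d - z) / (d - c) * d = c + d - z by field_simp; ring] at h₂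
  linear_combination h₁ + h₂ + (g c + g d) * hab

theorem ConvexOn.integral_le_trapezoid {g : ℝ → ℝ} {s : Set ℝ} (hg : ConvexOn ℝ s g)
    (hgc : ContinuousOn g s) {c d : ℝ} (hc : c ∈ s) (hd : d ∈ s) (hcd : c ≤ d) :
    ∫ z in c..d, g z ≤ (d - c) * (g c + g d) / 2 := by
  have hint : IntervalIntegrable g MeasureTheory.volume c d :=
    (hgc.mono (Set.uIcc_of_le hcd ▸ hg.1.ordConnected.out hc hd)).intervalIntegrable
  have hint' : IntervalIntegrable (fun z => g (c + d - z)) MeasureTheory.volume c d := by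
    simpa using (hint.comp_sub_left (c + d)).symm
  have hreflect : ∫ z in c..d, g (c + d - z) = ∫ z in c..d, g z := by
    rw [integral_comp_sub_left]; ring_nf
  have := integral_mono_on hcd (hint.add hint') intervalIntegrable_const
    fun z hz => hg.map_add_map_add_sub_le hc hd hz
  rw [integral_add hint hint', hreflect, integral_const, smul_eq_mul] at this
  linarith

theorem ConvexOn.integral_le_of_map_le_sub {g : ℝ → ℝ} {s : Set ℝ} (hg : ConvexOn ℝ s g)
    (hgc : ContinuousOn g s) {x : ℕ → ℝ} {c : ℝ} {n : ℕ} (hx : ∀ i < n, x i ≤ x (i + 1))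
    (hxs : ∀ i ≤ n, x i ∈ s) (hgx : ∀ i ≤ n, g (x i) ≤ c - i) :
    ∫ z in x 0..x n, g z ≤
      (c - n - 1 / 2) * x n - (c - 1 / 2) * x 0 + ∑ i ∈ range n, x (i + 1) := by
  induction n with
  | zero => simp
  | succ n ih =>
    have hint : ∀ i ≤ n + 1, ∀ j ≤ n + 1, IntervalIntegrable g MeasureTheory.volume (x i) (x j) :=
      fun i hi j hj =>
        (hgc.mono (hg.1.ordConnected.uIcc_subset (hxs i hi) (hxs j hj))).intervalIntegrable
    have hstep : ∫ z in x n..x (n + 1), g z ≤ (x (n + 1) - x n) * (c - n - 1 / 2) := by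
      have hn := hgx n n.le_succ
      have hn₁ := hgx (n + 1) le_rfl
      push_cast at hn₁
      refine (hg.integral_le_trapezoid hgc (hxs n n.le_succ) (hxs (n + 1) le_rfl)
        (hx n n.lt_succ_self)).trans ?_
      nlinarith [hx n n.lt_succ_self]
    have := ih (fun i hi => hx i (by omega)) (fun i hi => hxs i (by omega))
      (fun i hi => hgx i (by omega))
    rw [← integral_add_adjacent_intervals (hint 0 (by omega) n n.le_succ)
      (hint n n.le_succ _ le_rfl), sum_range_succ]
    push_cast
    linarith

theorem AntitoneOn.exists_unit_level_points {g : ℝ → ℝ} {a c t : ℝ} {K : ℕ} (hac : a ≤ c)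
    (hg : AntitoneOn g (Set.Icc a c)) (hgc : ContinuousOn g (Set.Icc a c)) (hct : g c < t)
    (hta : t + K - 1 ≤ g a) :
    ∃ x : ℕ → ℝ, x 0 = a ∧ (∀ i ≤ K, x i ∈ Set.Icc a c) ∧ (∀ i < K, x i ≤ x (i + 1)) ∧
      ∀ i, 0 < i → i ≤ K → x i < c ∧ g (x i) = t + K - i := by
  have hlevel : ∀ i ∈ Icc 1 K, ∃ y ∈ Set.Icc a c, g y = t + K - i := by
    intro i hi
    rw [mem_Icc] at hi
    have hi₁ : (1 : ℝ) ≤ i := by exact_mod_cast hi.1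
    have hiK : (i : ℝ) ≤ K := by exact_mod_cast hi.2
    exact intermediate_value_Icc' hac hgc ⟨by linarith, by linarith⟩
  choose! u hu_mem hu_val using hlevel
  set x : ℕ → ℝ := fun i => if i = 0 then a else u i
  have hx_mem : ∀ i ≤ K, x i ∈ Set.Icc a c := by
    intro i hi
    rcases i.eq_zero_or_pos with rfl | hi₀
    · exact ⟨le_rfl, hac⟩
    · simpa [x, hi₀.ne'] using hu_mem i (mem_Icc.2 ⟨hi₀, hi⟩)
  have hx_val : ∀ i, 0 < i → i ≤ K → g (x i) = t + K - i := fun i hi₀ hi => by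
    simpa [x, hi₀.ne'] using hu_val i (mem_Icc.2 ⟨hi₀, hi⟩)
  refine ⟨x, if_pos rfl, hx_mem, fun i hi => ?_, fun i hi₀ hi => ⟨?_, hx_val i hi₀ hi⟩⟩
  · rcases i.eq_zero_or_pos with rfl | hi₀
    · exact (hx_mem 1 hi).1
    · refine (hg.reflect_lt (hx_mem (i + 1) hi) (hx_mem i hi.le) ?_).le
      rw [hx_val i hi₀ hi.le, hx_val (i + 1) i.succ_pos hi]
      push_cast
      linarith
  · refine hg.reflect_lt ⟨hac, le_rfl⟩ (hx_mem i hi) ?_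
    have : (i : ℝ) ≤ K := by exact_mod_cast hi
    linarith [hx_val i hi₀ hi]

theorem le_card_filter_natCast_le {y : ℝ} {M : ℕ} (hy₀ : 0 ≤ y) (hyM : y < M) :
    y ≤ #{m ∈ range M | ((m : ℕ) : ℝ) ≤ y} := by
  have hfilter : {m ∈ range M | ((m : ℕ) : ℝ) ≤ y} = range (⌊y⌋₊ + 1) := by
    ext m
    have : ⌊y⌋₊ < M := (Nat.floor_lt hy₀).2 hyM
    simp only [mem_filter, mem_range, Nat.lt_succ_iff, ← Nat.le_floor_iff hy₀]
    omega
  rw [hfilter, card_range]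
  push_cast
  exact (Nat.lt_floor_add_one y).le

theorem sum_le_sum_of_le_imp_sub_le {M n : ℕ} {y : ℕ → ℝ} {F : ℕ → ℕ}
    (hy : ∀ i < n, y i ∈ Set.Ico 0 (M : ℝ))
    (hF : ∀ m < M, ∀ i < n, (m : ℝ) ≤ y i → n - i ≤ F m) :
    ∑ i ∈ range n, y i ≤ ∑ m ∈ range M, (F m : ℝ) := by
  let r : ℕ → ℕ → Prop := fun i m => (m : ℝ) ≤ y i
  have hbelow : ∀ m ∈ range M, #((range n).bipartiteBelow r m) ≤ F m := by
    intro m hm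
    calc #((range n).bipartiteBelow r m) ≤ #(Ico (n - F m) n) := by
          refine card_le_card fun i hi => ?_
          simp only [mem_bipartiteBelow, mem_range, r] at hi hm
          have := hF m hm i hi.1 hi.2
          rw [mem_Ico]
          omega
      _ ≤ F m := by simp only [Nat.card_Ico]; omega
  calc ∑ i ∈ range n, y i ≤ ∑ i ∈ range n, (#((range M).bipartiteAbove r i) : ℝ) :=
        sum_le_sum fun i hi => le_card_filter_natCast_le (hy i (mem_range.1 hi)).1
          (hy i (mem_range.1 hi)).2
    _ = ∑ m ∈ range M, (#((range n).bipartiteBelow r m) : ℝ) := by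
        exact_mod_cast sum_card_bipartiteAbove_eq_sum_card_bipartiteBelow r
    _ ≤ ∑ m ∈ range M, (F m : ℝ) := sum_le_sum fun m hm => by exact_mod_cast hbelow m hm

theorem natCast_add_sum_le_sum_floor {g : ℝ → ℝ} {M n : ℕ} {y : ℕ → ℝ}
    (hg : AntitoneOn g (Set.Icc 0 (M : ℝ))) (hgm : ∀ m < M, 1 / 4 ≤ g m)
    (hy : ∀ i < n, y i ∈ Set.Ico 0 (M : ℝ)) (hgy : ∀ i < n, g (y i) = n + 1 / 4 - i) :
    M + ∑ i ∈ range n, y i ≤ ∑ m ∈ range M, (⌊g m + 3 / 4⌋₊ : ℝ) := by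
  have hfloor : ∀ m < M, 1 ≤ ⌊g m + 3 / 4⌋₊ := fun m hm =>
    Nat.le_floor (by push_cast; linarith [hgm m hm])
  have hF : ∀ m < M, ∀ i < n, (m : ℝ) ≤ y i → n - i ≤ ⌊g m + 3 / 4⌋₊ - 1 := by
    intro m hm i hi hmy
    have hIco : Set.Ico 0 (M : ℝ) ⊆ Set.Icc 0 M := Set.Ico_subset_Icc_self
    have := hg (hIco ⟨m.cast_nonneg, by exact_mod_cast hm⟩) (hIco (hy i hi)) hmy
    have : n + 1 - i ≤ ⌊g m + 3 / 4⌋₊ :=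
      Nat.le_floor (by rw [Nat.cast_sub (by omega)]; push_cast; linarith [hgy i hi])
    omega
  calc M + ∑ i ∈ range n, y i ≤ M + ∑ m ∈ range M, ((⌊g m + 3 / 4⌋₊ - 1 : ℕ) : ℝ) := by
        gcongr; exact sum_le_sum_of_le_imp_sub_le hy hF
    _ = ∑ m ∈ range M, (⌊g m + 3 / 4⌋₊ : ℝ) := by
        rw [sum_congr rfl fun m hm => Nat.cast_sub (hfloor m (mem_range.1 hm)), sum_sub_distrib]
        simp

theorem ConvexOn.integral_le_sum_floor_sub {g : ℝ → ℝ} {M : ℕ}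
    (hconv : ConvexOn ℝ (Set.Icc 0 (M : ℝ)) g) (hanti : AntitoneOn g (Set.Icc 0 (M : ℝ)))
    (hcont : ContinuousOn g (Set.Icc 0 (M : ℝ))) (hgm : ∀ m < M, 1 / 4 ≤ g m)
    (hgM : g M < 1 / 4) :
    ∫ z in (0 : ℝ)..M, g z ≤ ∑ m ∈ range M, (⌊g m + 3 / 4⌋₊ : ℝ) - M / 4 := by
  rcases M.eq_zero_or_pos with rfl | hM
  · simp
  set K := ⌊g 0 + 3 / 4⌋₊
  have hK : 1 ≤ K := Nat.le_floor (by push_cast; linarith [hgm 0 hM])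
  have hg0K : g 0 < 1 / 4 + K := by linarith [Nat.lt_floor_add_one (g 0 + 3 / 4)]
  have hKg0 : 1 / 4 + K - 1 ≤ g 0 := by
    linarith [Nat.floor_le (by linarith [hgm 0 hM] : 0 ≤ g 0 + 3 / 4)]
  obtain ⟨x, hx0, hx_mem, hx_mono, hx_lev⟩ :=
    hanti.exists_unit_level_points M.cast_nonneg hcont hgM hKg0
  have hx_le : ∀ i ≤ K, g (x i) ≤ 1 / 4 + K - i := by
    intro i hi
    rcases i.eq_zero_or_pos with rfl | hi₀
    · simpa [hx0] using hg0K.le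
    · exact (hx_lev i hi₀ hi).2.le
  have hxK := hx_mem K le_rfl
  have hM_mem : (M : ℝ) ∈ Set.Icc 0 (M : ℝ) := ⟨M.cast_nonneg, le_rfl⟩
  have hhead := hconv.integral_le_of_map_le_sub hcont hx_mono hx_mem hx_le
  rw [hx0] at hhead
  have htail : ∫ z in x K..M, g z ≤ (M - x K) / 4 :=
    (hconv.integral_le_trapezoid hcont hxK hM_mem hxK.2).trans
      (by rw [(hx_lev K hK le_rfl).2]; nlinarith [hxK.2])
  have hcount := natCast_add_sum_le_sum_floor (n := K - 1) (y := fun i => x (i + 1)) hanti hgm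
    (fun i hi => ⟨(hx_mem _ (by omega)).1, (hx_lev _ i.succ_pos (by omega)).1⟩)
    (fun i hi => by rw [(hx_lev _ i.succ_pos (by omega)).2]; push_cast [Nat.cast_sub hK]; ring)
  have hsum : ∑ i ∈ range K, x (i + 1) = ∑ i ∈ range (K - 1), x (i + 1) + x K := by
    conv_lhs => rw [← Nat.sub_add_cancel hK]
    rw [sum_range_succ, Nat.sub_add_cancel hK]
  rw [← integral_add_adjacent_intervals
    ((hcont.mono (Set.Icc_subset_Icc_right hxK.2)).intervalIntegrable_of_Icc hxK.1)
    ((hcont.mono (Set.Icc_subset_Icc_left hxK.1)).intervalIntegrable_of_Icc hxK.2)]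
  linarith [hxK.2]

theorem sum_range_natFloor_le_sum_Icc_floor {f : ℝ → ℝ} {M : ℕ} {N : ℤ} (hMN : (M : ℤ) ≤ N + 1)
    (hf : ∀ m ∈ Icc 0 N, 0 ≤ f m) :
    ∑ m ∈ range M, (⌊f m⌋₊ : ℝ) ≤ ∑ m ∈ Icc 0 N, (⌊f m⌋ : ℝ) := by
  have hrange : ∀ m ∈ range M, (m : ℤ) ∈ Icc 0 N := fun m hm => by
    rw [mem_range] at hm
    rw [mem_Icc]
    omega
  calc ∑ m ∈ range M, (⌊f m⌋₊ : ℝ) = ∑ m ∈ range M, (⌊f ((m : ℤ) : ℝ)⌋ : ℝ) :=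
        sum_congr rfl fun m hm => by
          rw [Int.cast_natCast, natCast_floor_eq_intCast_floor (by simpa using hf _ (hrange m hm))]
    _ = ∑ m ∈ (range M).image (Nat.cast : ℕ → ℤ), (⌊f m⌋ : ℝ) := by
        rw [sum_image fun a _ b _ h => Nat.cast_injective h]
    _ ≤ ∑ m ∈ Icc 0 N, (⌊f m⌋ : ℝ) := by
        refine sum_le_sum_of_subset_of_nonneg (image_subset_iff.2 hrange) fun m hm _ => ?_
        exact_mod_cast Int.floor_nonneg.2 (hf m hm)

theorem stmt9_general (b : ℝ) (hb : 0 < b) (g : ℝ → ℝ)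
    (hnonneg : ∀ z ∈ Set.Icc (0 : ℝ) b, 0 ≤ g z)
    (hanti : AntitoneOn g (Set.Icc (0 : ℝ) b))
    (hconv : ConvexOn ℝ (Set.Icc (0 : ℝ) b) g)
    (hgb : g b = 0)
    (hlip : ∀ z ∈ Set.Icc (0 : ℝ) b, ∀ w ∈ Set.Icc (0 : ℝ) b,
      |g z - g w| ≤ |z - w| / 2)
    (M₀ : ℤ)
    (hM₀max : 0 ≤ M₀ - 1 ∧ M₀ - 1 ≤ ⌊b⌋ ∧ 1 / 4 ≤ g ((M₀ : ℝ) - 1) ∧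
      ∀ m : ℤ, M₀ - 1 < m → m ≤ ⌊b⌋ → g (m : ℝ) < 1 / 4)
    (hM₀b : (M₀ : ℝ) ≤ b) :
    (∫ z in (0 : ℝ)..b, g z) - (b - 3 * (M₀ : ℝ)) / 8 ≤
      ∑ m ∈ Finset.Icc 0 ⌊b⌋, (⌊g (m : ℝ) + 3 / 4⌋ : ℝ) := by
  obtain ⟨hM₀pos, hM₀floor, hgM₀pred, hgM₀succ⟩ := hM₀max
  have hgM : g M₀ < 1 / 4 := hgM₀succ M₀ (by omega) (Int.le_floor.2 hM₀b)
  lift M₀ to ℕ using (by omega) with M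
  push_cast at hM₀b hgM₀pred hgM ⊢
  have hcont : ContinuousOn g (Set.Icc 0 b) :=
    (LipschitzOnWith.of_dist_le' (K := 1 / 2) fun z hz w hw => by
      rw [Real.dist_eq, Real.dist_eq]; linarith [hlip z hz w hw]).continuousOn
  have hI : Set.Icc 0 (M : ℝ) ⊆ Set.Icc 0 b := Set.Icc_subset_Icc_right hM₀b
  have hMb : (M : ℝ) ∈ Set.Icc 0 b := ⟨M.cast_nonneg, hM₀b⟩
  have hgm : ∀ m < M, 1 / 4 ≤ g m := fun m hm => by
    have hm' : (m : ℝ) + 1 ≤ M := by exact_mod_cast hm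
    exact hgM₀pred.trans (hanti ⟨m.cast_nonneg, by linarith⟩ ⟨by linarith, by linarith⟩ (by linarith))
  have hhead := (hconv.subset hI (convex_Icc 0 _)).integral_le_sum_floor_sub (hanti.mono hI)
    (hcont.mono hI) hgm hgM
  have htail : ∫ z in (M : ℝ)..b, g z ≤ (b - M) / 8 :=
    (hconv.integral_le_trapezoid hcont hMb ⟨hb.le, le_rfl⟩ hM₀b).trans
      (by rw [hgb]; nlinarith [hnonneg _ hMb])
  have hsum := sum_range_natFloor_le_sum_Icc_floor (M := M) (f := fun z => g z + 3 / 4)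
    (N := ⌊b⌋) (by omega) fun m hm => by
      rw [mem_Icc] at hm
      have := hnonneg m ⟨by exact_mod_cast hm.1, (Int.cast_le.2 hm.2).trans (Int.floor_le b)⟩
      linarith
  rw [← integral_add_adjacent_intervals ((hcont.mono hI).intervalIntegrable_of_Icc hMb.1)
    ((hcont.mono (Set.Icc_subset_Icc_left hMb.1)).intervalIntegrable_of_Icc hM₀b)]
  linarith

theorem stmt9 (b : ℝ) (hb : 0 < b) (g : ℝ → ℝ)
    (hnonneg : ∀ z ∈ Set.Icc (0 : ℝ) b, 0 ≤ g z)
    (hanti : AntitoneOn g (Set.Icc (0 : ℝ) b))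
    (hconv : ConvexOn ℝ (Set.Icc (0 : ℝ) b) g)
    (hg0 : 1 / 4 ≤ g 0) (hgb : g b = 0)
    (hlip : ∀ z ∈ Set.Icc (0 : ℝ) b, ∀ w ∈ Set.Icc (0 : ℝ) b,
      |g z - g w| ≤ |z - w| / 2)
    (M₀ : ℤ)
    (hM₀max : 0 ≤ M₀ - 1 ∧ M₀ - 1 ≤ ⌊b⌋ ∧ 1 / 4 ≤ g ((M₀ : ℝ) - 1) ∧
      ∀ m : ℤ, M₀ - 1 < m → m ≤ ⌊b⌋ → g (m : ℝ) < 1 / 4)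
    (hM₀b : (M₀ : ℝ) ≤ b) :
    (∫ z in (0 : ℝ)..b, g z) - (b - 3 * (M₀ : ℝ)) / 8 ≤
      ∑ m ∈ Finset.Icc 0 ⌊b⌋, (⌊g (m : ℝ) + 3 / 4⌋ : ℝ) :=
  stmt9_general b hb g hnonneg hanti hconv hgb hlip M₀ hM₀max hM₀b
end

section
/- For integers d ≥ 3 and m ≥ 0 and real z with m ≤ z − d/2 + 1 < m + 1, one has C(m+d−2, d−1) + (z − m − d/2 + 1)·C(m+d−2, d−2) ≤ z^{d−1}/(d−1)!. -/
open Finset in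
private lemma amgm_pow (n : ℕ) (hn : 0 < n) (f : ℕ → ℝ) (hf : ∀ i ∈ range n, 0 ≤ f i) :
    ∏ i ∈ range n, f i ≤ ((∑ i ∈ range n, f i) / n) ^ n := by
  have hn' : (n : ℝ) ≠ 0 := Nat.cast_ne_zero.mpr hn.ne'
  have h := Real.geom_mean_le_arith_mean_weighted (range n) (fun _ => (n : ℝ)⁻¹) f
    (fun i _ => by positivity) (by simp [Finset.sum_const, Finset.card_range, hn']) hf
  have hL : (∏ i ∈ range n, f i ^ ((n : ℝ)⁻¹)) ^ n = ∏ i ∈ range n, f i := by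
    rw [← Finset.prod_pow]
    refine Finset.prod_congr rfl fun i hi => ?_
    rw [← Real.rpow_natCast (f i ^ ((n : ℝ)⁻¹)) n, ← Real.rpow_mul (hf i hi),
      inv_mul_cancel₀ hn', Real.rpow_one]
  have hR : ∑ i ∈ range n, (n : ℝ)⁻¹ * f i = (∑ i ∈ range n, f i) / n := by
    rw [← Finset.mul_sum]; ring
  calc ∏ i ∈ range n, f i = (∏ i ∈ range n, f i ^ ((n : ℝ)⁻¹)) ^ n := hL.symm
    _ ≤ (∑ i ∈ range n, (n : ℝ)⁻¹ * f i) ^ n := by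
        apply pow_le_pow_left₀ (Finset.prod_nonneg fun i hi => Real.rpow_nonneg (hf i hi) _) h
    _ = ((∑ i ∈ range n, f i) / n) ^ n := by rw [hR]

private lemma asc_prod (m : ℕ) : ∀ k : ℕ, m.ascFactorial k = ∏ i ∈ Finset.range k, (m + i)
  | 0 => by simp
  | k + 1 => by rw [Nat.ascFactorial_succ, Finset.prod_range_succ, asc_prod m k, mul_comm]

private lemma sum_id_real (n : ℕ) :
    ∑ i ∈ Finset.range n, (i : ℝ) = n * (n - 1) / 2 := by
  induction n with
  | zero => simp
  | succ k ih => rw [Finset.sum_range_succ, ih]; push_cast; ring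

theorem stmt13 (d m : ℕ) (hd : 3 ≤ d) (z : ℝ)
    (h1 : (m : ℝ) ≤ z - (d : ℝ) / 2 + 1)
    (h2 : z - (d : ℝ) / 2 + 1 < (m : ℝ) + 1) :
    ((m + d - 2).choose (d - 1) : ℝ) +
        (z - (m : ℝ) - (d : ℝ) / 2 + 1) * ((m + d - 2).choose (d - 2) : ℝ) ≤
      z ^ (d - 1) / ((d - 1).factorial : ℝ) := by
  obtain ⟨n, rfl⟩ : ∃ n, d = n + 2 := ⟨d - 2, by omega⟩
  have hn : 1 ≤ n := by omega
  rw [show m + (n + 2) - 2 = m + n from by omega, show n + 2 - 1 = n + 1 from by omega,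
    show n + 2 - 2 = n from by omega]
  push_cast at h1 h2 ⊢
  set x : ℝ := z - (m : ℝ) - ((n : ℝ) + 2) / 2 + 1 with hxdef
  have hx : 0 ≤ x := by rw [hxdef]; linarith
  have hz : z = (m : ℝ) + x + n / 2 := by rw [hxdef]; ring
  -- ℕ-level identities
  have c1 : (n + 1).factorial * (m + n).choose (n + 1)
      = m * ∏ i ∈ Finset.range n, (m + 1 + i) := by
    rw [show m + n = m + (n + 1) - 1 from by omega, ← Nat.ascFactorial_eq_factorial_mul_choose',
      asc_prod, Finset.prod_range_succ', mul_comm]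
    congr 1
    exact Finset.prod_congr rfl fun i _ => by omega
  have c2 : n.factorial * (m + n).choose n = ∏ i ∈ Finset.range n, (m + 1 + i) := by
    rw [← Nat.ascFactorial_eq_factorial_mul_choose, asc_prod]
  -- cast to ℝ
  have hcast : ((∏ i ∈ Finset.range n, (m + 1 + i) : ℕ) : ℝ)
      = ∏ i ∈ Finset.range n, ((m : ℝ) + 1 + i) := by push_cast; rfl
  have r1 : ((m + n).choose (n + 1) : ℝ) * ((n + 1).factorial : ℝ)
      = (m : ℝ) * ∏ i ∈ Finset.range n, ((m : ℝ) + 1 + i) := by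
    rw [mul_comm, ← Nat.cast_mul, c1, Nat.cast_mul, hcast]
  have r2 : ((m + n).choose n : ℝ) * ((n + 1).factorial : ℝ)
      = ((n : ℝ) + 1) * ∏ i ∈ Finset.range n, ((m : ℝ) + 1 + i) := by
    calc ((m + n).choose n : ℝ) * ((n + 1).factorial : ℝ)
        = ((n : ℝ) + 1) * ((n.factorial * (m + n).choose n : ℕ) : ℝ) := by
          rw [Nat.factorial_succ]; push_cast; ring
      _ = ((n : ℝ) + 1) * ∏ i ∈ Finset.range n, ((m : ℝ) + 1 + i) := by rw [c2, hcast]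
  -- AM-GM setup
  set f : ℕ → ℝ := fun i => if i < n then (m : ℝ) + 1 + i else (m : ℝ) + ((n : ℝ) + 1) * x
    with hf
  have hfnn : ∀ i ∈ Finset.range (n + 1), 0 ≤ f i := by
    intro i _
    simp only [hf]
    split <;> positivity
  have hprod : ∏ i ∈ Finset.range (n + 1), f i
      = ((m : ℝ) + ((n : ℝ) + 1) * x) * ∏ i ∈ Finset.range n, ((m : ℝ) + 1 + i) := by
    rw [Finset.prod_range_succ, mul_comm]
    congr 1
    · simp [hf]
    · exact Finset.prod_congr rfl fun i hi => by simp [hf, Finset.mem_range.mp hi]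
  have hsum : ∑ i ∈ Finset.range (n + 1), f i = ((n : ℝ) + 1) * z := by
    rw [Finset.sum_range_succ]
    have h0 : ∑ i ∈ Finset.range n, f i = ∑ i ∈ Finset.range n, ((m : ℝ) + 1 + i) :=
      Finset.sum_congr rfl fun i hi => by simp [hf, Finset.mem_range.mp hi]
    have hfn : f n = (m : ℝ) + ((n : ℝ) + 1) * x := by simp [hf]
    rw [h0, Finset.sum_add_distrib, Finset.sum_const, Finset.card_range, nsmul_eq_mul,
      sum_id_real, hfn, hz]
    ring
  have amgm := amgm_pow (n + 1) (by omega) f hfnn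
  rw [hsum, hprod,
    show ((n : ℝ) + 1) * z / ((n + 1 : ℕ) : ℝ) = z by
      push_cast; exact mul_div_cancel_left₀ z (by positivity)] at amgm
  have hfac : (0 : ℝ) < ((n + 1).factorial : ℝ) := by positivity
  rw [le_div_iff₀ hfac]
  calc (((m + n).choose (n + 1) : ℝ) + x * ((m + n).choose n : ℝ)) * ((n + 1).factorial : ℝ)
      = ((m : ℝ) + ((n : ℝ) + 1) * x) * ∏ i ∈ Finset.range n, ((m : ℝ) + 1 + i) := by
        linear_combination r1 + x * r2
    _ ≤ z ^ (n + 1) := amgm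
end

section
/- For every λ ≥ 6π/(3π−8), one has 3·G_λ^{−1}(1/4) − λ(1 + 4/π) − 3 ≥ 0, where G_λ^{−1} is the inverse of G_λ(z) = (1/π)(√(λ²−z²) − z·arccos(z/λ)). -/
/-! `G l` is strictly decreasing on `[-l, l]` with derivative `-arccos (z / l) / π`, and it is
homogeneous: `G l (l * c) = l * G 1 c`. Since `G 1 (5/6) = (√11 - 5 arccos (5/6)) / (6π) > 1/52`,
for `l ≥ 13` the point `5l/6` already satisfies `G l (5l/6) ≥ 1/4`, so the solution `y` of
`G l y = 1/4` is at least `5l/6`. Then `3y - l(1 + 4/π) - 3 ≥ l(3π - 8)/(2π) - 3 ≥ 0`. -/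

open Real Set

lemma continuous_G (l : ℝ) : Continuous (G l) := by
  unfold G
  fun_prop

lemma hasDerivAt_G {l x : ℝ} (hl : 0 < l) (hx : x ∈ Ioo (-l) l) :
    HasDerivAt (G l) (-arccos (x / l) / π) x := by
  obtain ⟨hxl, hxr⟩ := hx
  have hlx : 0 < l ^ 2 - x ^ 2 := by nlinarith
  have hsqrt : HasDerivAt (fun z : ℝ => √(l ^ 2 - z ^ 2))
      (-(2 * x) / (2 * √(l ^ 2 - x ^ 2))) x := by
    have : HasDerivAt (fun z : ℝ => l ^ 2 - z ^ 2) (-(2 * x)) x := by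
      simpa using (hasDerivAt_pow 2 x).const_sub (l ^ 2)
    exact this.sqrt hlx.ne'
  have harccos : HasDerivAt (fun z : ℝ => arccos (z / l))
      (-(1 / √(1 - (x / l) ^ 2)) * (1 / l)) x := by
    have hx1 : -1 < x / l := by rwa [lt_div_iff₀ hl, neg_one_mul]
    have hx2 : x / l < 1 := (div_lt_one hl).mpr hxr
    have hdiv : HasDerivAt (fun z : ℝ => z / l) (1 / l) x := by
      simpa using (hasDerivAt_id x).div_const l
    exact (hasDerivAt_arccos hx1.ne' hx2.ne).comp (h₂ := arccos) x hdiv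
  have hsqrt_eq : √(1 - (x / l) ^ 2) = √(l ^ 2 - x ^ 2) / l := by
    rw [show 1 - (x / l) ^ 2 = (l ^ 2 - x ^ 2) / l ^ 2 by field_simp, sqrt_div hlx.le,
      sqrt_sq hl.le]
  refine ((hsqrt.sub ((hasDerivAt_id x).mul harccos)).const_mul (1 / π)).congr_deriv ?_
  have : 0 < √(l ^ 2 - x ^ 2) := sqrt_pos.mpr hlx
  rw [hsqrt_eq, id]
  field_simp
  ring

lemma strictAntiOn_G {l : ℝ} (hl : 0 < l) : StrictAntiOn (G l) (Icc (-l) l) := by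
  refine strictAntiOn_of_deriv_neg (convex_Icc _ _) (continuous_G l).continuousOn ?_
  intro x hx
  rw [interior_Icc] at hx
  have harccos : 0 < arccos (x / l) := arccos_pos.mpr ((div_lt_one hl).mpr hx.2)
  rw [(hasDerivAt_G hl hx).deriv]
  exact div_neg_of_neg_of_pos (neg_neg_of_pos harccos) pi_pos

lemma G_mul_self {l : ℝ} (hl : 0 < l) (c : ℝ) : G l (l * c) = l * G 1 c := by
  have hsqrt : √(l ^ 2 - (l * c) ^ 2) = l * √(1 - c ^ 2) := by
    rw [show l ^ 2 - (l * c) ^ 2 = l ^ 2 * (1 - c ^ 2) by ring, sqrt_mul (sq_nonneg l),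
      sqrt_sq hl.le]
  simp only [G, hsqrt, mul_div_cancel_left₀ c hl.ne', div_one, one_pow]
  ring

lemma arccos_five_sixths_le : arccos (5 / 6) ≤ 0.59 := by
  have hcos : cos 0.59 ≤ 5 / 6 := by
    have h := (abs_le.mp (cos_bound (x := 0.59) (by norm_num [abs_of_nonneg]))).2
    norm_num [abs_of_nonneg] at h ⊢
    linarith
  calc arccos (5 / 6) ≤ arccos (cos 0.59) := arccos_le_arccos hcos
    _ = 0.59 := arccos_cos (by norm_num) (by linarith [pi_gt_three])

lemma G_one_five_sixths : G 1 (5 / 6) = (√11 - 5 * arccos (5 / 6)) / (6 * π) := by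
  have hsqrt : √(1 ^ 2 - (5 / 6 : ℝ) ^ 2) = √11 / 6 := by
    rw [show 1 ^ 2 - (5 / 6 : ℝ) ^ 2 = 11 / 6 ^ 2 by norm_num, sqrt_div' _ (sq_nonneg 6),
      sqrt_sq (by norm_num)]
  rw [G, div_one, hsqrt]
  field_simp

lemma quarter_le_G_five_sixths {l : ℝ} (hl : 13 ≤ l) : 1 / 4 ≤ G l (5 * l / 6) := by
  have hsqrt11 : (3.3166 : ℝ) ≤ √11 := by
    rw [le_sqrt (by norm_num) (by norm_num)]
    norm_num
  have hG1 : 1 / 52 ≤ G 1 (5 / 6) := by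
    rw [G_one_five_sixths, le_div_iff₀ (by positivity)]
    nlinarith [arccos_five_sixths_le, pi_lt_d4]
  rw [show 5 * l / 6 = l * (5 / 6) by ring, G_mul_self (by linarith)]
  nlinarith

theorem stmt16 (l : ℝ) (hl : 6 * Real.pi / (3 * Real.pi - 8) ≤ l)
    (y : ℝ) (hy : y ∈ Set.Icc 0 l) (hGy : G l y = 1 / 4) :
    0 ≤ 3 * y - l * (1 + 4 / Real.pi) - 3 := by
  have hπ8 : 0 < 3 * π - 8 := by linarith [pi_gt_d2]
  have hl' : 6 * π ≤ l * (3 * π - 8) := (div_le_iff₀ hπ8).mp hl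
  have hl13 : 13 ≤ l := by nlinarith [pi_lt_d2]
  have hy56 : 5 * l / 6 ≤ y := by
    by_contra! h
    have hmem : 5 * l / 6 ∈ Icc (-l) l := ⟨by linarith, by linarith⟩
    have := strictAntiOn_G (by linarith) ⟨by linarith [hy.1], hy.2⟩ hmem h
    linarith [quarter_le_G_five_sixths hl13]
  have hπl : l * (4 / π) * π = 4 * l := by field_simp
  nlinarith [pi_pos]
end
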